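/- arXiv:2111.02973 — 3 statements merged into one kernel-verified Lean document; each statement's English description precedes it below -/
import Mathlib

section
/- Let π be a permutation of {1,…,n}, let RB be its set of run bottoms and RT its set of run tops. Then there exists a unique bijection σ_e from {1,…,n}∖RT to {1,…,n}∖RB whose multiset of inversion bottoms {{σ_e(j) : i < j, both in the domain, σ_e(i) > σ_e(j)}} equals the multiset of those descent views of π that are not run bottoms. Moreover, this bijection satisfies σ_e(i) > i for every i in {1,…,n}∖RT. -/
open Finset
open scoped Classical

variable {n : ℕ}

/-- `π` has a descent at (0-based) position `k`. -/
def IsDesc (π : Equiv.Perm (Fin n)) (k : ℕ) : Prop :=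
  ∃ hk : k + 1 < n, π ⟨k + 1, hk⟩ < π ⟨k, Nat.lt_of_succ_lt hk⟩

/-- Positions `i ≤ j` lie in the same descending run of `π`:
every step between them is a descent. -/
def SameRunLe (π : Equiv.Perm (Fin n)) (i j : Fin n) : Prop :=
  i ≤ j ∧ ∀ k : ℕ, i.val ≤ k → k < j.val → IsDesc π k

/-- The first position of the descending run containing position `p`. -/
noncomputable def runStartPos (π : Equiv.Perm (Fin n)) (p : Fin n) : Fin n :=
  (Finset.univ.filter fun a => SameRunLe π a p).min'
    ⟨p, Finset.mem_filter.mpr ⟨Finset.mem_univ p,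
      le_refl p, fun k hk hk' => absurd hk' (Nat.not_lt.mpr hk)⟩⟩

/-- The last position of the descending run containing position `p`. -/
noncomputable def runEndPos (π : Equiv.Perm (Fin n)) (p : Fin n) : Fin n :=
  (Finset.univ.filter fun b => SameRunLe π p b).max'
    ⟨p, Finset.mem_filter.mpr ⟨Finset.mem_univ p,
      le_refl p, fun k hk hk' => absurd hk' (Nat.not_lt.mpr hk)⟩⟩

/-- The run top (largest value) of the descending run of `π` containing the value `v`. -/
noncomputable def runTopVal (π : Equiv.Perm (Fin n)) (v : Fin n) : Fin n :=
  π (runStartPos π (π.symm v))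

/-- The run bottom (smallest value) of the descending run of `π` containing the value `v`. -/
noncomputable def runBotVal (π : Equiv.Perm (Fin n)) (v : Fin n) : Fin n :=
  π (runEndPos π (π.symm v))

/-- The set of run tops of `π`. -/
noncomputable def RT (π : Equiv.Perm (Fin n)) : Finset (Fin n) :=
  Finset.univ.filter fun v => runTopVal π v = v

/-- The set of run bottoms of `π`. -/
noncomputable def RB (π : Equiv.Perm (Fin n)) : Finset (Fin n) :=
  Finset.univ.filter fun v => runBotVal π v = v

/-- The descending run of `π` containing the value `v`, as a set of values. -/
noncomputable def runOf (π : Equiv.Perm (Fin n)) (v : Fin n) : Finset (Fin n) :=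
  Finset.univ.filter fun w => runStartPos π (π.symm w) = runStartPos π (π.symm v)

/-- The set of descending runs of `π`, each run regarded as a set of values. -/
noncomputable def runsSet (π : Equiv.Perm (Fin n)) : Finset (Finset (Fin n)) :=
  Finset.univ.image (runOf π)

/-- The set `31∗2(π)`: pairs `(i,j)` with `i+1 < j`, `π i > π j > π (i+1)`, and the run
bottom of the run containing `π i` (and `π (i+1)`) smaller than the run bottom of
the run containing `π j`. -/
noncomputable def Pat31s2 (π : Equiv.Perm (Fin n)) : Finset (Fin n × Fin n) :=
  Finset.univ.filter fun p => ∃ h : p.1.val + 1 < n,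
    p.1.val + 1 < p.2.val ∧ π p.2 < π p.1 ∧ π ⟨p.1.val + 1, h⟩ < π p.2 ∧
    runBotVal π (π p.1) < runBotVal π (π p.2)

/-- The multiset of descent views of `π`. -/
noncomputable def dvM (π : Equiv.Perm (Fin n)) : Multiset (Fin n) :=
  (Pat31s2 π).val.map fun p => π p.2

/-- Invisible inversions of `σ`: pairs `(i,j)` with `i < j` and `σ i > σ j > i`. -/
def invisibleInversions (σ : Equiv.Perm (Fin n)) : Finset (Fin n × Fin n) :=
  Finset.univ.filter fun p => p.1 < p.2 ∧ σ p.2 < σ p.1 ∧ p.1 < σ p.2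

/-- The multiset of invisible inversion bottoms of `σ`. -/
def invInvBottoms (σ : Equiv.Perm (Fin n)) : Multiset (Fin n) :=
  (invisibleInversions σ).val.map fun p => σ p.2

/-- The set of positions of weak deficiencies of `σ`. -/
def weakDefPos (σ : Equiv.Perm (Fin n)) : Finset (Fin n) :=
  Finset.univ.filter fun i => σ i ≤ i

/-- The set of values of weak deficiencies of `σ`. -/
def weakDefVals (σ : Equiv.Perm (Fin n)) : Finset (Fin n) :=
  (weakDefPos σ).image σ

/-- Global ascents of `π`, as 1-based indices `m ∈ {1,…,n}`: `π` restricted to the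
first `m` positions is a permutation of the smallest `m` values. -/
def globalAscents (π : Equiv.Perm (Fin n)) : Finset ℕ :=
  (Finset.Icc 1 n).filter fun m => ∀ i : Fin n, i.val < m → (π i).val < m

/-- The set of left-to-right maxima (as values) of `π`. -/
def lrMax (π : Equiv.Perm (Fin n)) : Finset (Fin n) :=
  Finset.univ.filter fun v => ∀ i : Fin n, i < π.symm v → π i < v

/-- The set of maximal elements of the cycles of `σ`. -/
noncomputable def cycleMaxes (σ : Equiv.Perm (Fin n)) : Finset (Fin n) :=
  Finset.univ.filter fun v => ∀ w : Fin n, σ.SameCycle v w → w ≤ v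

/-- The one-line notation of `π` (0-based values). -/
def oneLine (π : Equiv.Perm (Fin n)) : List ℕ :=
  (List.finRange n).map fun i => (π i : ℕ)

/-- Helper for splitting a list into maximal ascending runs. -/
def addRun (x : ℕ) : List (List ℕ) → List (List ℕ)
  | [] => [[x]]
  | [] :: rest => [x] :: rest
  | (y :: r) :: rest =>
      if x < y then (x :: y :: r) :: rest else [x] :: (y :: r) :: rest

/-- Split a list into its maximal ascending runs. -/
def splitAscRuns (l : List ℕ) : List (List ℕ) := l.foldr addRun []

/-- Sort the ascending runs of `l` in increasing order of their minimal (= first)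
elements and concatenate. -/
def runsortL (l : List ℕ) : List ℕ :=
  ((splitAscRuns l).mergeSort fun r s => decide (r.headI ≤ s.headI)).flatten

/-- The number of occurrences of the vincular pattern `13-2` in the word `l`:
pairs `(i,j)` with `i < j` and `l i < l j < l (i+1)`. -/
def occ132 (l : List ℕ) : ℕ :=
  ((Finset.range l.length ×ˢ Finset.range l.length).filter fun p =>
    p.1 < p.2 ∧ l.getD p.1 0 < l.getD p.2 0 ∧ l.getD p.2 0 < l.getD (p.1 + 1) 0).card

/-- The multiset of inversion bottoms of a bijection from `{1,…,n}∖RT` to `{1,…,n}∖RB`. -/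
noncomputable def invBottomsE (π : Equiv.Perm (Fin n))
    (f : {x : Fin n // x ∉ RT π} ≃ {x : Fin n // x ∉ RB π}) : Multiset (Fin n) :=
  ((Finset.univ :
      Finset ({x : Fin n // x ∉ RT π} × {x : Fin n // x ∉ RT π})).filter fun p =>
    (p.1 : Fin n) < (p.2 : Fin n) ∧ (f p.2 : Fin n) < (f p.1 : Fin n)).val.map
    fun p => (f p.2 : Fin n)

/-- The multiset of descent views of `π` which are not run bottoms. -/
noncomputable def dvNotRB (π : Equiv.Perm (Fin n)) : Multiset (Fin n) :=
  (dvM π).filter fun v => v ∉ RB π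

/-- `f` is the bijection `χ_e(π)`: its multiset of inversion bottoms is the multiset of
descent views of `π` which are not run bottoms. -/
def IsChiE (π : Equiv.Perm (Fin n))
    (f : {x : Fin n // x ∉ RT π} ≃ {x : Fin n // x ∉ RB π}) : Prop :=
  invBottomsE π f = dvNotRB π

/-- The graph of the partial bijection `f`. -/
noncomputable def chiEGraph (π : Equiv.Perm (Fin n))
    (f : {x : Fin n // x ∉ RT π} ≃ {x : Fin n // x ∉ RB π}) : Finset (Fin n × Fin n) :=
  Finset.univ.image fun x : {x : Fin n // x ∉ RT π} => ((x : Fin n), (f x : Fin n))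

/-- The number of cycles (orbits) of `σ`. -/
noncomputable def numCycles (σ : Equiv.Perm (Fin n)) : ℕ :=
  σ.cycleType.card + (Finset.univ.filter fun v => σ v = v).card


/-!
A bijection `f : A → B` between finite subsets of a linear order is determined by its multiset
of inversion bottoms: the smallest value `v₀ = min B` is an inversion bottom exactly as often as
there are positions before `f⁻¹ v₀`, which pins down `f⁻¹ v₀`, and one recurses on
`A ∖ {f⁻¹ v₀}`. The same greedy recursion builds an `f` with prescribed inversion bottoms `M`
and `a < f a` as soon as `M.count v + #{b ∈ B | b ≤ v} ≤ #{a ∈ A | a < v}` for all `v ∈ B`.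

Here the positions `[n] ∖ RT` are the descent bottoms and the values `[n] ∖ RB` the descent tops
of `π`. A descent view `π i > v > π (i+1)` gives the descent `π i` straddling `v`, and each
descent top `w ≤ v` gives a descent whose bottom is below `v` too; these descents are distinct,
so their number is at most the number of descent bottoms below `v`.
-/

section InversionBottoms

variable {α : Type*} [LinearOrder α]

def invBottoms (A : Finset α) (f : α → α) : Multiset α :=
  {p ∈ A ×ˢ A | p.1 < p.2 ∧ f p.2 < f p.1}.val.map fun p => f p.2

lemma invBottoms_congr {A : Finset α} {f g : α → α} (h : Set.EqOn f g A) :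
    invBottoms A f = invBottoms A g := by
  have hS : {p ∈ A ×ˢ A | p.1 < p.2 ∧ f p.2 < f p.1}
      = {p ∈ A ×ˢ A | p.1 < p.2 ∧ g p.2 < g p.1} :=
    filter_congr fun p hp => by
      rw [mem_product] at hp
      rw [h hp.1, h hp.2]
  rw [invBottoms, invBottoms, hS]
  exact Multiset.map_congr rfl fun p hp => h (mem_product.1 (mem_filter.1 hp).1).2

lemma strictMonoOn_card_filter_lt (A : Finset α) : StrictMonoOn (fun a => #{x ∈ A | x < a}) A :=
  fun a ha _ _ hab => card_lt_card <| ssubset_iff_of_subset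
    (monotone_filter_right A fun _ _ hx => hx.trans hab) |>.2
      ⟨a, mem_filter.2 ⟨ha, hab⟩, fun h => lt_irrefl a (mem_filter.1 h).2⟩

lemma exists_mem_card_filter_lt_eq (C : Finset α) {m : ℕ} (hm : m < #C) :
    ∃ a ∈ C, #{x ∈ C | x < a} = m := by
  induction C using Finset.induction_on_max with
  | empty => simp at hm
  | insert a s hlt ih =>
    have ha : a ∉ s := fun h => lt_irrefl a (hlt a h)
    rw [card_insert_of_notMem ha] at hm
    rcases (Nat.lt_succ_iff.1 hm).lt_or_eq with hm | rfl
    · obtain ⟨b, hb, hbm⟩ := ih hm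
      refine ⟨b, mem_insert_of_mem hb, ?_⟩
      rwa [filter_insert, if_neg (hlt b hb).not_gt]
    · refine ⟨a, mem_insert_self a s, ?_⟩
      rw [filter_insert, if_neg (lt_irrefl a), filter_true_of_mem hlt]

lemma invBottoms_eq_erase_add_replicate {A : Finset α} {f : α → α} (hf : Set.InjOn f A)
    {a₀ : α} (ha₀ : a₀ ∈ A) (hmin : ∀ a ∈ A, f a₀ ≤ f a) :
    invBottoms A f
      = invBottoms (A.erase a₀) f + Multiset.replicate #{a ∈ A | a < a₀} (f a₀) := by
  set S := {p ∈ A ×ˢ A | p.1 < p.2 ∧ f p.2 < f p.1}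
  have hlt : ∀ a ∈ A, a ≠ a₀ → f a₀ < f a := fun a ha hne =>
    (hmin a ha).lt_of_ne fun h => hne (hf ha ha₀ h.symm)
  have hrest : S.filter (fun p => p.2 ≠ a₀)
      = {p ∈ A.erase a₀ ×ˢ A.erase a₀ | p.1 < p.2 ∧ f p.2 < f p.1} := by
    ext ⟨x, y⟩
    simp only [S, mem_filter, mem_product, mem_erase]
    constructor
    · rintro ⟨⟨⟨hx, hy⟩, hxy, hfyx⟩, hya⟩
      refine ⟨⟨⟨?_, hx⟩, hya, hy⟩, hxy, hfyx⟩
      rintro rfl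
      exact (hmin y hy).not_gt hfyx
    · rintro ⟨⟨⟨-, hx⟩, hya, hy⟩, hxy, hfyx⟩
      exact ⟨⟨⟨hx, hy⟩, hxy, hfyx⟩, hya⟩
  have hlast : S.filter (fun p => ¬ p.2 ≠ a₀) = {a ∈ A | a < a₀}.image (·, a₀) := by
    ext ⟨x, y⟩
    simp only [S, mem_filter, mem_product, mem_image, Prod.mk.injEq, not_not]
    constructor
    · rintro ⟨⟨⟨hx, -⟩, hxy, -⟩, rfl⟩
      exact ⟨x, ⟨hx, hxy⟩, rfl, rfl⟩
    · rintro ⟨x, ⟨hx, hxa⟩, rfl, rfl⟩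
      exact ⟨⟨⟨hx, ha₀⟩, hxa, hlt x hx hxa.ne⟩, rfl⟩
  rw [invBottoms, ← Multiset.filter_add_not (fun p => p.2 ≠ a₀) S.val, Multiset.map_add,
    ← filter_val, ← filter_val, hrest, hlast, invBottoms]
  congr 1
  rw [Multiset.eq_replicate]
  refine ⟨?_, ?_⟩
  · rw [Multiset.card_map, card_val, card_image_of_injective _ fun a b h => (Prod.mk.inj h).1]
  · intro b hb
    obtain ⟨p, hp, rfl⟩ := Multiset.mem_map.1 hb
    obtain ⟨x, -, rfl⟩ := mem_image.1 hp
    rfl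

lemma count_invBottoms_of_forall_le {A : Finset α} {f : α → α} (hf : Set.InjOn f A)
    {a₀ : α} (ha₀ : a₀ ∈ A) (hmin : ∀ a ∈ A, f a₀ ≤ f a) :
    (invBottoms A f).count (f a₀) = #{a ∈ A | a < a₀} := by
  have hnot : f a₀ ∉ invBottoms (A.erase a₀) f := by
    intro h
    obtain ⟨p, hp, hpa⟩ := Multiset.mem_map.1 h
    have hp₂ := (mem_product.1 (mem_filter.1 hp).1).2
    exact (mem_erase.1 hp₂).1 (hf (mem_of_mem_erase hp₂) ha₀ hpa)
  rw [invBottoms_eq_erase_add_replicate hf ha₀ hmin, Multiset.count_add,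
    Multiset.count_eq_zero.2 hnot, Multiset.count_replicate_self, zero_add]

lemma Set.BijOn.finset_erase {A B : Finset α} {f : α → α} (hf : Set.BijOn f A B) {a : α}
    (ha : a ∈ A) : Set.BijOn f ↑(A.erase a) ↑(B.erase (f a)) := by
  rw [coe_erase, coe_erase]
  exact hf.sdiff_singleton ha

theorem Set.BijOn.eqOn_of_invBottoms_eq {A B : Finset α} {f g : α → α}
    (hf : Set.BijOn f A B) (hg : Set.BijOn g A B) (h : invBottoms A f = invBottoms A g) :
    Set.EqOn f g A := by
  induction A using Finset.strongInduction generalizing B with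
  | H A ih =>
  rcases A.eq_empty_or_nonempty with rfl | ⟨a, ha⟩
  · simp
  have hB : B.Nonempty := ⟨f a, hf.mapsTo ha⟩
  obtain ⟨a₀, ha₀, hfa₀⟩ := hf.surjOn (B.min'_mem hB)
  obtain ⟨b₀, hb₀, hgb₀⟩ := hg.surjOn (B.min'_mem hB)
  have hfmin : ∀ a ∈ A, f a₀ ≤ f a := fun a ha => hfa₀ ▸ B.min'_le _ (hf.mapsTo ha)
  have hgmin : ∀ a ∈ A, g b₀ ≤ g a := fun a ha => hgb₀ ▸ B.min'_le _ (hg.mapsTo ha)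
  obtain rfl : a₀ = b₀ := (strictMonoOn_card_filter_lt A).injOn ha₀ hb₀ <| by
    rw [← count_invBottoms_of_forall_le hf.injOn ha₀ hfmin,
      ← count_invBottoms_of_forall_le hg.injOn hb₀ hgmin, hfa₀, hgb₀, h]
  have hrest : invBottoms (A.erase a₀) f = invBottoms (A.erase a₀) g := by
    have hf' := invBottoms_eq_erase_add_replicate hf.injOn ha₀ hfmin
    have hg' := invBottoms_eq_erase_add_replicate hg.injOn ha₀ hgmin
    rw [hfa₀] at hf'
    rw [hgb₀] at hg'
    exact add_right_cancel (hf'.symm.trans (h.trans hg'))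
  have hgB := hg.finset_erase ha₀
  rw [hgb₀, ← hfa₀] at hgB
  have hEq := ih _ (erase_ssubset ha₀) (hf.finset_erase ha₀) hgB hrest
  intro x hx
  by_cases hxa : x = a₀
  · rw [hxa, hfa₀, hgb₀]
  · exact hEq (mem_erase.2 ⟨hxa, hx⟩)

lemma Set.BijOn.update_of_erase {A B : Finset α} {f : α → α} {a₀ v₀ : α}
    (hf : Set.BijOn f ↑(A.erase a₀) ↑(B.erase v₀)) (ha₀ : a₀ ∈ A) (hv₀ : v₀ ∈ B) :
    Set.BijOn (Function.update f a₀ v₀) A B := by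
  have hfe : Set.EqOn f (Function.update f a₀ v₀) ↑(A.erase a₀) := fun x hx =>
    (Function.update_of_ne (mem_erase.1 hx).1 _ _).symm
  have := (hf.congr hfe).insert (a := a₀) (by simp)
  rwa [Function.update_self, ← coe_insert, ← coe_insert, insert_erase ha₀,
    insert_erase hv₀] at this

lemma count_add_card_le_erase {A B : Finset α} {M : Multiset α}
    (hle : ∀ v ∈ B, M.count v + #{b ∈ B | b ≤ v} ≤ #{a ∈ A | a < v})
    {a₀ v₀ : α} (ha₀ : a₀ ∈ A) (hv₀ : v₀ ∈ B) (hav : a₀ < v₀) (hmin : ∀ b ∈ B, v₀ ≤ b) :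
    ∀ v ∈ B.erase v₀, (M.filter (· ≠ v₀)).count v + #{b ∈ B.erase v₀ | b ≤ v}
      ≤ #{a ∈ A.erase a₀ | a < v} := by
  intro v hv
  have hv₀v := hmin v (mem_of_mem_erase hv)
  have hB : v₀ ∈ B.filter (· ≤ v) := mem_filter.2 ⟨hv₀, hv₀v⟩
  have hA : a₀ ∈ A.filter (· < v) := mem_filter.2 ⟨ha₀, hav.trans_le hv₀v⟩
  rw [Multiset.count_filter_of_pos (p := (· ≠ v₀)) (ne_of_mem_erase hv), filter_erase,
    filter_erase, card_erase_of_mem hB, card_erase_of_mem hA]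
  have := hle v (mem_of_mem_erase hv)
  have := card_pos.2 ⟨v₀, hB⟩
  omega

theorem exists_bijOn_invBottoms_eq {A B : Finset α} {M : Multiset α} (hcard : #A = #B)
    (hM : ∀ v ∈ M, v ∈ B)
    (hle : ∀ v ∈ B, M.count v + #{b ∈ B | b ≤ v} ≤ #{a ∈ A | a < v}) :
    ∃ f : α → α, Set.BijOn f A B ∧ invBottoms A f = M ∧ ∀ a ∈ A, a < f a := by
  induction A using Finset.strongInduction generalizing B M with
  | H A ih =>
  rcases B.eq_empty_or_nonempty with rfl | hB
  · obtain rfl : A = ∅ := card_eq_zero.1 hcard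
    obtain rfl : M = 0 := Multiset.eq_zero_of_forall_notMem fun v hv => by simpa using hM v hv
    exact ⟨id, by simp, by simp [invBottoms], by simp⟩
  set v₀ := B.min' hB
  have hv₀ : v₀ ∈ B := B.min'_mem hB
  have hm : M.count v₀ < #{a ∈ A | a < v₀} := by
    have := hle v₀ hv₀
    have : 0 < #{b ∈ B | b ≤ v₀} := card_pos.2 ⟨v₀, mem_filter.2 ⟨hv₀, le_rfl⟩⟩
    omega
  obtain ⟨a₀, ha₀, hrank⟩ := exists_mem_card_filter_lt_eq _ hm
  obtain ⟨ha₀, hav⟩ := mem_filter.1 ha₀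
  rw [filter_filter] at hrank
  have hrank' : #{a ∈ A | a < a₀} = M.count v₀ := by
    rw [← hrank]
    congr 1
    exact filter_congr fun x _ => ⟨fun h => ⟨h.trans hav, h⟩, And.right⟩
  obtain ⟨f, hf, hfM, hflt⟩ := ih _ (erase_ssubset ha₀) (M := M.filter (· ≠ v₀))
    (by rw [card_erase_of_mem ha₀, card_erase_of_mem hv₀, hcard])
    (fun v hv => mem_erase.2 ⟨(Multiset.mem_filter.1 hv).2, hM v (Multiset.mem_filter.1 hv).1⟩)
    (count_add_card_le_erase hle ha₀ hv₀ hav fun b hb => B.min'_le b hb)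
  have hfe : Set.EqOn f (Function.update f a₀ v₀) ↑(A.erase a₀) := fun x hx =>
    (Function.update_of_ne (mem_erase.1 hx).1 _ _).symm
  have hbij := hf.update_of_erase ha₀ hv₀
  refine ⟨Function.update f a₀ v₀, hbij, ?_, fun a ha => ?_⟩
  · rw [invBottoms_eq_erase_add_replicate hbij.injOn ha₀
      (fun a ha => by simpa using B.min'_le _ (hbij.mapsTo ha)),
      ← invBottoms_congr hfe, hfM, Function.update_self, hrank']
    ext v
    rcases eq_or_ne v v₀ with rfl | hv
    · simp
    · simp [hv, hv.symm, Multiset.count_replicate]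
  · by_cases h : a = a₀
    · rw [h, Function.update_self]
      exact hav
    · rw [Function.update_of_ne h]
      exact hflt a (mem_erase.2 ⟨h, ha⟩)

end InversionBottoms

section Runs

variable (π : Equiv.Perm (Fin n))

lemma runEndPos_eq_self_iff (p : Fin n) : runEndPos π p = p ↔ ¬ IsDesc π p := by
  have hend : SameRunLe π p (runEndPos π p) := (mem_filter.1 (max'_mem _ _)).2
  constructor
  · rintro h ⟨hk, hlt⟩
    have hsucc : SameRunLe π p ⟨p + 1, hk⟩ := ⟨Fin.le_def.2 (Nat.le_succ _), fun k hpk hk' => by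
      obtain rfl : k = p := by simp only at hk'; omega
      exact ⟨hk, hlt⟩⟩
    have : _ ≤ runEndPos π p := le_max' (univ.filter fun b => SameRunLe π p b) _
      (mem_filter.2 ⟨mem_univ _, hsucc⟩)
    rw [h, Fin.le_def] at this
    simp at this
  · intro h
    by_contra hne
    exact h (hend.2 p le_rfl (Fin.lt_def.1 (lt_of_le_of_ne hend.1 (Ne.symm hne))))

lemma runStartPos_eq_self_iff (p : Fin n) :
    runStartPos π p = p ↔ p.val = 0 ∨ ¬ IsDesc π (p - 1) := by
  have hstart : SameRunLe π (runStartPos π p) p :=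
    (mem_filter.1 (min'_mem (univ.filter fun a => SameRunLe π a p) _)).2
  constructor
  · intro h
    refine or_iff_not_imp_left.2 fun hp ⟨hk, hlt⟩ => ?_
    have hpred : SameRunLe π ⟨p - 1, by omega⟩ p := ⟨Fin.le_def.2 (Nat.sub_le _ _),
      fun k hk' hkp => by
        obtain rfl : k = p - 1 := by simp only at hk'; omega
        exact ⟨hk, hlt⟩⟩
    have : runStartPos π p ≤ _ := min'_le (univ.filter fun a => SameRunLe π a p) _
      (mem_filter.2 ⟨mem_univ _, hpred⟩)
    rw [h, Fin.le_def] at this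
    simp only at this
    omega
  · intro h
    by_contra hne
    have hlt := Fin.lt_def.1 (lt_of_le_of_ne hstart.1 hne)
    exact h.elim (by omega) (· (hstart.2 (p - 1) (by omega) (by omega)))

lemma apply_notMem_RB_iff (i : Fin n) : π i ∉ RB π ↔ IsDesc π i := by
  rw [RB, mem_filter]
  simp only [mem_univ, true_and, runBotVal, Equiv.symm_apply_apply,
    EmbeddingLike.apply_eq_iff_eq, runEndPos_eq_self_iff, not_not]

lemma apply_notMem_RT_iff (i : Fin n) : π i ∉ RT π ↔ i.val ≠ 0 ∧ IsDesc π (i - 1) := by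
  rw [RT, mem_filter]
  simp only [mem_univ, true_and, runTopVal, Equiv.symm_apply_apply,
    EmbeddingLike.apply_eq_iff_eq, runStartPos_eq_self_iff, not_or, not_not]

/-- The value following `v` in the one-line notation of `π` (`v` itself if it comes last). -/
noncomputable def nextVal (v : Fin n) : Fin n :=
  if h : (π.symm v).val + 1 < n then π ⟨(π.symm v).val + 1, h⟩ else v

/-- The value preceding `v` in the one-line notation of `π` (`v` itself if it comes first). -/
noncomputable def prevVal (v : Fin n) : Fin n :=
  π ⟨(π.symm v).val - 1, by omega⟩

lemma nextVal_apply (i : Fin n) (h : i.val + 1 < n) : nextVal π (π i) = π ⟨i + 1, h⟩ := by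
  simp [nextVal, h]

lemma nextVal_lt {v : Fin n} (hv : v ∉ RB π) : nextVal π v < v := by
  obtain ⟨i, rfl⟩ := π.surjective v
  obtain ⟨h, hlt⟩ := (apply_notMem_RB_iff π i).1 hv
  rwa [nextVal_apply π i h]

lemma bijOn_nextVal : Set.BijOn (nextVal π) ↑(RB π)ᶜ ↑(RT π)ᶜ := by
  have hRB : ∀ i, π i ∈ (↑(RB π)ᶜ : Set (Fin n)) ↔ IsDesc π i := fun i => by
    simpa using apply_notMem_RB_iff π i
  have hRT : ∀ i, π i ∈ (↑(RT π)ᶜ : Set (Fin n)) ↔ i.val ≠ 0 ∧ IsDesc π (i - 1) := fun i => by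
    simpa using apply_notMem_RT_iff π i
  refine Set.InvOn.bijOn (f' := prevVal π) ⟨?_, ?_⟩ ?_ ?_ <;> intro v hv <;>
    obtain ⟨i, rfl⟩ := π.surjective v
  · obtain ⟨h, -⟩ := (hRB i).1 hv
    simp [nextVal_apply π i h, prevVal]
  · obtain ⟨hi, h, -⟩ := (hRT i).1 hv
    have : i.val - 1 + 1 = i.val := by omega
    simp [prevVal, nextVal, this]
  · obtain ⟨h, hlt⟩ := (hRB i).1 hv
    rw [nextVal_apply π i h, hRT]
    exact ⟨by simp, h, hlt⟩
  · simp only [prevVal, Equiv.symm_apply_apply]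
    exact (hRB _).2 ((hRT i).1 hv).2

lemma count_dvNotRB_le {v : Fin n} (hv : v ∉ RB π) :
    (dvNotRB π).count v ≤ #{w ∈ (RB π)ᶜ | nextVal π w < v ∧ v < w} := by
  rw [dvNotRB, Multiset.count_filter_of_pos (p := (· ∉ RB π)) hv, dvM, Multiset.count_map,
    ← filter_val, card_val]
  refine card_le_card_of_injOn (fun p => π p.1) ?_ ?_
  · rintro ⟨i, j⟩ hp
    simp only [coe_filter, Pat31s2, mem_filter, mem_univ, true_and, Set.mem_ofPred_eq] at hp
    obtain ⟨⟨h, -, hji, hij, -⟩, rfl⟩ := hp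
    simp only [coe_filter, mem_compl, Set.mem_ofPred_eq, apply_notMem_RB_iff, nextVal_apply π i h]
    exact ⟨⟨h, hij.trans hji⟩, hij, hji⟩
  · rintro ⟨i, j⟩ hp ⟨i', j'⟩ hp' h
    simp only [coe_filter, Set.mem_ofPred_eq] at hp hp'
    exact Prod.ext (π.injective h) (π.injective (hp.2.symm.trans hp'.2))

lemma count_dvNotRB_add_card_le {v : Fin n} (hv : v ∉ RB π) :
    (dvNotRB π).count v + #{b ∈ (RB π)ᶜ | b ≤ v} ≤ #{a ∈ (RT π)ᶜ | a < v} := by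
  set S := {w ∈ (RB π)ᶜ | nextVal π w < v}
  have hlow : {b ∈ (RB π)ᶜ | b ≤ v} = {w ∈ S | w ≤ v} := by
    rw [filter_filter]
    exact filter_congr fun w hw => ⟨fun h => ⟨(nextVal_lt π (mem_compl.1 hw)).trans_le h, h⟩,
      And.right⟩
  have hhigh : {w ∈ (RB π)ᶜ | nextVal π w < v ∧ v < w} = {w ∈ S | ¬ w ≤ v} := by
    rw [filter_filter]
    simp only [not_le]
  have hS : #S ≤ #{a ∈ (RT π)ᶜ | a < v} := by
    refine card_le_card_of_injOn (nextVal π) (fun w hw => ?_)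
      ((bijOn_nextVal π).injOn.mono (coe_subset.2 (filter_subset _ _)))
    exact mem_filter.2 ⟨(bijOn_nextVal π).mapsTo (filter_subset _ _ hw), (mem_filter.1 hw).2⟩
  have := count_dvNotRB_le π hv
  rw [hhigh] at this
  have := card_filter_add_card_filter_not (s := S) (· ≤ v)
  rw [hlow]
  omega

end Runs

lemma Equiv.bijOn_extendSubtype {α : Type*} {p q : α → Prop} [DecidablePred p] [DecidablePred q]
    [Finite {x | p x}] (e : {x // p x} ≃ {x // q x}) :
    Set.BijOn e.extendSubtype {x | p x} {x | q x} := by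
  refine ⟨fun x hx => e.extendSubtype_mem x hx, e.extendSubtype.injective.injOn, fun y hy => ?_⟩
  refine ⟨e.symm ⟨y, hy⟩, (e.symm ⟨y, hy⟩).2, ?_⟩
  rw [e.extendSubtype_apply_of_mem _ (e.symm ⟨y, hy⟩).2, Subtype.coe_eta, Equiv.apply_symm_apply]

section Bijections

variable (π : Equiv.Perm (Fin n))

lemma invBottomsE_eq_invBottoms (f : {x : Fin n // x ∉ RT π} ≃ {x : Fin n // x ∉ RB π}) :
    invBottomsE π f = invBottoms (RT π)ᶜ f.extendSubtype := by
  have hS : {p ∈ (RT π)ᶜ ×ˢ (RT π)ᶜ | p.1 < p.2 ∧ f.extendSubtype p.2 < f.extendSubtype p.1}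
      = (univ.filter fun p : {x // x ∉ RT π} × {x // x ∉ RT π} => (p.1 : Fin n) < p.2 ∧
          (f p.2 : Fin n) < f p.1).map
        ((Function.Embedding.subtype _).prodMap (Function.Embedding.subtype _)) := by
    ext ⟨x, y⟩
    simp only [mem_filter, mem_product, mem_compl, mem_map, mem_univ, true_and]
    constructor
    · rintro ⟨⟨hx, hy⟩, hxy, hf⟩
      rw [f.extendSubtype_apply_of_mem _ hx, f.extendSubtype_apply_of_mem _ hy] at hf
      exact ⟨(⟨x, hx⟩, ⟨y, hy⟩), ⟨hxy, hf⟩, rfl⟩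
    · rintro ⟨⟨a, b⟩, ⟨hab, hf⟩, heq⟩
      simp only [Function.Embedding.prodMap, Function.Embedding.coe_subtype, Prod.map,
        Function.Embedding.coeFn_mk, Prod.mk.injEq] at heq
      obtain ⟨rfl, rfl⟩ := heq
      rw [f.extendSubtype_apply_of_mem _ a.2, f.extendSubtype_apply_of_mem _ b.2]
      exact ⟨⟨a.2, b.2⟩, hab, hf⟩
  rw [invBottomsE, invBottoms, hS, map_val, Multiset.map_map]
  exact Multiset.map_congr rfl fun p _ => (f.extendSubtype_apply_of_mem _ p.2.2).symm

lemma bijOn_extendSubtype (f : {x : Fin n // x ∉ RT π} ≃ {x : Fin n // x ∉ RB π}) :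
    Set.BijOn f.extendSubtype ↑(RT π)ᶜ ↑(RB π)ᶜ := by
  rw [coe_compl, coe_compl]
  exact f.bijOn_extendSubtype

lemma invBottomsE_injective : Function.Injective (invBottomsE π) := by
  intro f g h
  have hfg := (bijOn_extendSubtype π f).eqOn_of_invBottoms_eq (bijOn_extendSubtype π g)
    (by rwa [← invBottomsE_eq_invBottoms, ← invBottomsE_eq_invBottoms])
  refine Equiv.ext fun x => Subtype.ext ?_
  have hx := hfg (mem_compl.2 x.2)
  rwa [f.extendSubtype_apply_of_mem _ x.2, g.extendSubtype_apply_of_mem _ x.2] at hx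

lemma exists_invBottomsE_eq_dvNotRB :
    ∃ f : {x : Fin n // x ∉ RT π} ≃ {x : Fin n // x ∉ RB π},
      invBottomsE π f = dvNotRB π ∧ ∀ x : {x : Fin n // x ∉ RT π}, (x : Fin n) < f x := by
  obtain ⟨F, hF, hFM, hFlt⟩ := exists_bijOn_invBottoms_eq (M := dvNotRB π)
    (bijOn_nextVal π).finsetCard_eq.symm
    (fun v hv => mem_compl.2 (Multiset.mem_filter.1 hv).2)
    (fun v hv => count_dvNotRB_add_card_le π (mem_compl.1 hv))
  rw [coe_compl, coe_compl] at hF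
  let f : {x : Fin n // x ∉ RT π} ≃ {x : Fin n // x ∉ RB π} := hF.equiv F
  refine ⟨f, ?_, fun x => hFlt x (mem_compl.2 x.2)⟩
  rw [invBottomsE_eq_invBottoms, ← hFM]
  exact invBottoms_congr fun x hx => f.extendSubtype_apply_of_mem x (mem_compl.1 hx)

end Bijections

/-- there is a unique bijection from `{1,…,n}∖RT` to `{1,…,n}∖RB`
whose multiset of inversion bottoms is the multiset of descent views of `π` which
are not run bottoms; moreover it is strictly increasing at each point. -/
theorem stmt4 (n : ℕ) (π : Equiv.Perm (Fin n)) :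
    (∃! f : {x : Fin n // x ∉ RT π} ≃ {x : Fin n // x ∉ RB π},
        invBottomsE π f = dvNotRB π) ∧
    ∀ f : {x : Fin n // x ∉ RT π} ≃ {x : Fin n // x ∉ RB π},
      invBottomsE π f = dvNotRB π →
        ∀ x : {x : Fin n // x ∉ RT π}, (x : Fin n) < (f x : Fin n) := by
  obtain ⟨e, he, hlt⟩ := exists_invBottomsE_eq_dvNotRB π
  have huniq : ∀ f, invBottomsE π f = dvNotRB π → f = e :=
    fun f hf => invBottomsE_injective π (hf.trans he.symm)
  exact ⟨⟨e, he, huniq⟩, fun f hf => huniq f hf ▸ hlt⟩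
end

section
/- Let π be a permutation of {1,…,n} with set of run bottoms RB and set of run tops RT, and let v ∈ {1,…,n}. Then the number of run bottoms strictly less than v minus the number of run tops strictly less than v equals the number of descending runs r of π with min(r) < v ≤ max(r). Moreover, if v is not a run bottom of π, then this common quantity is strictly greater than dv_π(v), the multiplicity of v in the multiset of descent views of π. -/
open Finset
open scoped Classical

variable {n : ℕ}

namespace Stmt9Aux

variable {n : ℕ} (π : Equiv.Perm (Fin n))

lemma sameRunLe_refl (p : Fin n) : SameRunLe π p p :=
  ⟨le_refl _, fun k hk hk' => absurd hk' (Nat.not_lt.mpr hk)⟩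

lemma sameRunLe_trans {a b c : Fin n} (h1 : SameRunLe π a b) (h2 : SameRunLe π b c) :
    SameRunLe π a c := by
  refine ⟨h1.1.trans h2.1, fun k hk hk' => ?_⟩
  rcases lt_or_ge k b.val with h | h
  · exact h1.2 k hk h
  · exact h2.2 k h hk'

lemma sameRunLe_left {a b c : Fin n} (h : SameRunLe π a c) (hab : a ≤ b) (hbc : b ≤ c) :
    SameRunLe π a b :=
  ⟨hab, fun k hk hk' => h.2 k hk (lt_of_lt_of_le hk' hbc)⟩

lemma sameRunLe_right {a b c : Fin n} (h : SameRunLe π a c) (hab : a ≤ b) (hbc : b ≤ c) :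
    SameRunLe π b c :=
  ⟨hbc, fun k hk hk' => h.2 k (le_trans hab hk) hk'⟩

lemma runStartPos_mem (p : Fin n) : SameRunLe π (runStartPos π p) p := by
  have := Finset.min'_mem (Finset.univ.filter fun a => SameRunLe π a p)
    ⟨p, Finset.mem_filter.mpr ⟨Finset.mem_univ p, sameRunLe_refl π p⟩⟩
  rw [Finset.mem_filter] at this
  exact this.2

lemma runStartPos_le (p : Fin n) : runStartPos π p ≤ p := (runStartPos_mem π p).1

lemma runStartPos_min {a p : Fin n} (h : SameRunLe π a p) : runStartPos π p ≤ a := by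
  unfold runStartPos
  apply Finset.min'_le
  exact Finset.mem_filter.mpr ⟨Finset.mem_univ a, h⟩

lemma runEndPos_mem (p : Fin n) : SameRunLe π p (runEndPos π p) := by
  have := Finset.max'_mem (Finset.univ.filter fun b => SameRunLe π p b)
    ⟨p, Finset.mem_filter.mpr ⟨Finset.mem_univ p, sameRunLe_refl π p⟩⟩
  rw [Finset.mem_filter] at this
  exact this.2

lemma le_runEndPos (p : Fin n) : p ≤ runEndPos π p := (runEndPos_mem π p).1

lemma runEndPos_max {b p : Fin n} (h : SameRunLe π p b) : b ≤ runEndPos π p := by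
  unfold runEndPos
  apply Finset.le_max'
  exact Finset.mem_filter.mpr ⟨Finset.mem_univ b, h⟩

lemma runStartPos_eq_of_sameRunLe {p q : Fin n} (h : SameRunLe π p q) :
    runStartPos π p = runStartPos π q := by
  apply le_antisymm
  · rcases le_or_gt (runStartPos π q) p with h1 | h1
    · exact runStartPos_min π (sameRunLe_left π (runStartPos_mem π q) h1 h.1)
    · exact le_trans (runStartPos_le π p) h1.le
  · exact runStartPos_min π (sameRunLe_trans π (runStartPos_mem π p) h)

lemma runEndPos_eq_of_sameRunLe {p q : Fin n} (h : SameRunLe π p q) :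
    runEndPos π p = runEndPos π q := by
  apply le_antisymm
  · rcases le_or_gt q (runEndPos π p) with h1 | h1
    · exact runEndPos_max π (sameRunLe_right π (runEndPos_mem π p) h.1 h1)
    · exact le_trans h1.le (le_runEndPos π q)
  · exact runEndPos_max π (sameRunLe_trans π h (runEndPos_mem π q))

lemma runStartPos_idem (p : Fin n) :
    runStartPos π (runStartPos π p) = runStartPos π p :=
  runStartPos_eq_of_sameRunLe π (runStartPos_mem π p)

lemma sameRunLe_of_start_eq {p q : Fin n} (h : runStartPos π p = runStartPos π q)
    (hpq : p ≤ q) : SameRunLe π p q :=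
  sameRunLe_right π (h ▸ runStartPos_mem π q) (runStartPos_le π p) hpq

lemma runEndPos_eq_of_start_eq {p q : Fin n} (h : runStartPos π p = runStartPos π q) :
    runEndPos π p = runEndPos π q := by
  rcases le_total p q with hpq | hpq
  · exact runEndPos_eq_of_sameRunLe π (sameRunLe_of_start_eq π h hpq)
  · exact (runEndPos_eq_of_sameRunLe π (sameRunLe_of_start_eq π h.symm hpq)).symm

lemma pos_mem_run_iff {p q : Fin n} :
    runStartPos π q = runStartPos π p ↔
      runStartPos π p ≤ q ∧ q ≤ runEndPos π p := by
  constructor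
  · intro h
    refine ⟨h ▸ runStartPos_le π q, ?_⟩
    exact (runEndPos_eq_of_start_eq π h) ▸ le_runEndPos π q
  · rintro ⟨h1, h2⟩
    have hse : SameRunLe π (runStartPos π p) (runEndPos π p) :=
      sameRunLe_trans π (runStartPos_mem π p) (runEndPos_mem π p)
    have hsq : SameRunLe π (runStartPos π p) q := sameRunLe_left π hse h1 h2
    have := runStartPos_eq_of_sameRunLe π hsq
    rw [runStartPos_idem] at this
    exact this.symm

lemma desc_chain (m : ℕ) (a : Fin n) (h : a.val + m < n)
    (hd : ∀ k, a.val ≤ k → k < a.val + m → IsDesc π k) :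
    π ⟨a.val + m, h⟩ ≤ π a := by
  induction m with
  | zero => exact le_of_eq (congrArg π (Fin.ext rfl))
  | succ m ih =>
    have h' : a.val + m < n := by omega
    obtain ⟨hk, hlt⟩ := hd (a.val + m) (by omega) (by omega)
    calc π ⟨a.val + (m + 1), h⟩ = π ⟨a.val + m + 1, hk⟩ := congrArg π (Fin.ext rfl)
      _ ≤ π ⟨a.val + m, h'⟩ := le_of_lt hlt
      _ ≤ π a := ih h' (fun k hk1 hk2 => hd k hk1 (by omega))

lemma desc_chain_lt (m : ℕ) (a : Fin n) (h : a.val + m < n) (hm : 0 < m)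
    (hd : ∀ k, a.val ≤ k → k < a.val + m → IsDesc π k) :
    π ⟨a.val + m, h⟩ < π a := by
  obtain ⟨m', rfl⟩ : ∃ m', m = m' + 1 := ⟨m - 1, by omega⟩
  have h' : a.val + m' < n := by omega
  obtain ⟨hk, hlt⟩ := hd (a.val + m') (by omega) (by omega)
  calc π ⟨a.val + (m' + 1), h⟩ = π ⟨a.val + m' + 1, hk⟩ := congrArg π (Fin.ext rfl)
    _ < π ⟨a.val + m', h'⟩ := hlt
    _ ≤ π a := desc_chain π m' a h' (fun k hk1 hk2 => hd k hk1 (by omega))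

lemma pi_lt_of_sameRunLe {a b : Fin n} (h : SameRunLe π a b) (hab : a < b) : π b < π a := by
  have hab' : a.val ≤ b.val := le_of_lt hab
  have hbn : b.val < n := b.isLt
  have hb : b = ⟨a.val + (b.val - a.val), by omega⟩ := Fin.ext (by simp; omega)
  rw [hb]
  exact desc_chain_lt π _ a _ (by omega) (fun k hk1 hk2 => h.2 k hk1 (by omega))

lemma pi_le_of_sameRunLe {a b : Fin n} (h : SameRunLe π a b) : π b ≤ π a := by
  rcases eq_or_lt_of_le h.1 with heq | hlt
  · exact le_of_eq (congrArg π heq.symm)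
  · exact (pi_lt_of_sameRunLe π h hlt).le

end Stmt9Aux
namespace Stmt9Aux

variable {n : ℕ} (π : Equiv.Perm (Fin n))

lemma mem_runOf {v w : Fin n} : w ∈ runOf π v ↔
    runStartPos π (π.symm w) = runStartPos π (π.symm v) := by
  simp [runOf]

lemma self_mem_runOf (v : Fin n) : v ∈ runOf π v := (mem_runOf π).mpr rfl

lemma runBotVal_mem (v : Fin n) : runBotVal π v ∈ runOf π v := by
  rw [mem_runOf, runBotVal, Equiv.symm_apply_apply]
  exact (runStartPos_eq_of_sameRunLe π (runEndPos_mem π (π.symm v))).symm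

lemma runTopVal_mem (v : Fin n) : runTopVal π v ∈ runOf π v := by
  rw [mem_runOf, runTopVal, Equiv.symm_apply_apply]
  exact runStartPos_idem π _

lemma runBotVal_le {v w : Fin n} (hw : w ∈ runOf π v) : runBotVal π v ≤ w := by
  rw [mem_runOf] at hw
  have hs : SameRunLe π (π.symm w) (runEndPos π (π.symm v)) := by
    have he := runEndPos_eq_of_start_eq π hw
    exact he ▸ runEndPos_mem π (π.symm w)
  have h := pi_le_of_sameRunLe π hs
  rw [Equiv.apply_symm_apply] at h
  exact h

lemma le_runTopVal {v w : Fin n} (hw : w ∈ runOf π v) : w ≤ runTopVal π v := by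
  rw [mem_runOf] at hw
  have hs : SameRunLe π (runStartPos π (π.symm v)) (π.symm w) :=
    hw ▸ runStartPos_mem π (π.symm w)
  have h := pi_le_of_sameRunLe π hs
  rw [Equiv.apply_symm_apply] at h
  exact h

lemma runOf_eq_of_mem {v w : Fin n} (h : w ∈ runOf π v) : runOf π w = runOf π v := by
  rw [mem_runOf] at h
  ext u
  rw [mem_runOf, mem_runOf, h]

lemma runBotVal_eq_of_mem {v w : Fin n} (h : w ∈ runOf π v) :
    runBotVal π w = runBotVal π v := by
  have he := runOf_eq_of_mem π h
  refine le_antisymm (runBotVal_le π ?_) (runBotVal_le π ?_)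
  · exact he ▸ runBotVal_mem π v
  · exact he ▸ runBotVal_mem π w

lemma runTopVal_eq_of_mem {v w : Fin n} (h : w ∈ runOf π v) :
    runTopVal π w = runTopVal π v := by
  have he := runOf_eq_of_mem π h
  refine le_antisymm (le_runTopVal π ?_) (le_runTopVal π ?_)
  · exact he ▸ runTopVal_mem π w
  · exact he ▸ runTopVal_mem π v

lemma runBotVal_le_self (v : Fin n) : runBotVal π v ≤ v :=
  runBotVal_le π (self_mem_runOf π v)

lemma self_le_runTopVal (v : Fin n) : v ≤ runTopVal π v :=
  le_runTopVal π (self_mem_runOf π v)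

lemma min_runOf (v : Fin n) : (runOf π v).min = (runBotVal π v : WithTop (Fin n)) := by
  have hne : (runOf π v).Nonempty := ⟨v, self_mem_runOf π v⟩
  rw [← Finset.coe_min' hne]
  congr 1
  exact le_antisymm (Finset.min'_le _ _ (runBotVal_mem π v))
    (Finset.le_min' _ _ _ fun w hw => runBotVal_le π hw)

lemma max_runOf (v : Fin n) : (runOf π v).max = (runTopVal π v : WithBot (Fin n)) := by
  have hne : (runOf π v).Nonempty := ⟨v, self_mem_runOf π v⟩
  rw [← Finset.coe_max' hne]
  congr 1
  exact le_antisymm (Finset.max'_le _ _ _ fun w hw => le_runTopVal π hw)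
    (Finset.le_max' _ _ (runTopVal_mem π v))

lemma mem_RB_iff {v : Fin n} : v ∈ RB π ↔ runBotVal π v = v := by simp [RB]

lemma mem_RT_iff {v : Fin n} : v ∈ RT π ↔ runTopVal π v = v := by simp [RT]

lemma mem_runsSet_iff {r : Finset (Fin n)} : r ∈ runsSet π ↔ ∃ w, runOf π w = r := by
  simp [runsSet]

end Stmt9Aux
namespace Stmt9Aux

variable {n : ℕ} (π : Equiv.Perm (Fin n))

lemma card_RB_filter (v : Fin n) :
    ((RB π).filter fun w => w < v).card =
      ((runsSet π).filter fun r => r.min < (v : WithTop (Fin n))).card := by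
  apply Finset.card_bij (fun b _ => runOf π b)
  · intro b hb
    rw [Finset.mem_filter] at hb ⊢
    obtain ⟨hb1, hb2⟩ := hb
    rw [mem_RB_iff] at hb1
    refine ⟨(mem_runsSet_iff π).mpr ⟨b, rfl⟩, ?_⟩
    rw [min_runOf, hb1]
    exact WithTop.coe_lt_coe.mpr hb2
  · intro b hb b' hb' h
    rw [Finset.mem_filter, mem_RB_iff] at hb hb'
    have hm : b' ∈ runOf π b := h ▸ self_mem_runOf π b'
    rw [← hb.1, ← hb'.1]
    exact (runBotVal_eq_of_mem π hm).symm
  · intro r hr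
    rw [Finset.mem_filter] at hr
    obtain ⟨hr1, hr2⟩ := hr
    obtain ⟨w, rfl⟩ := (mem_runsSet_iff π).mp hr1
    refine ⟨runBotVal π w, ?_, runOf_eq_of_mem π (runBotVal_mem π w)⟩
    rw [Finset.mem_filter, mem_RB_iff]
    rw [min_runOf] at hr2
    exact ⟨runBotVal_eq_of_mem π (runBotVal_mem π w), WithTop.coe_lt_coe.mp hr2⟩

lemma card_RT_filter (v : Fin n) :
    ((RT π).filter fun w => w < v).card =
      ((runsSet π).filter fun r => r.max < (v : WithBot (Fin n))).card := by
  apply Finset.card_bij (fun b _ => runOf π b)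
  · intro b hb
    rw [Finset.mem_filter] at hb ⊢
    obtain ⟨hb1, hb2⟩ := hb
    rw [mem_RT_iff] at hb1
    refine ⟨(mem_runsSet_iff π).mpr ⟨b, rfl⟩, ?_⟩
    rw [max_runOf, hb1]
    exact WithBot.coe_lt_coe.mpr hb2
  · intro b hb b' hb' h
    rw [Finset.mem_filter, mem_RT_iff] at hb hb'
    have hm : b' ∈ runOf π b := h ▸ self_mem_runOf π b'
    rw [← hb.1, ← hb'.1]
    exact (runTopVal_eq_of_mem π hm).symm
  · intro r hr
    rw [Finset.mem_filter] at hr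
    obtain ⟨hr1, hr2⟩ := hr
    obtain ⟨w, rfl⟩ := (mem_runsSet_iff π).mp hr1
    refine ⟨runTopVal π w, ?_, runOf_eq_of_mem π (runTopVal_mem π w)⟩
    rw [Finset.mem_filter, mem_RT_iff]
    rw [max_runOf] at hr2
    exact ⟨runTopVal_eq_of_mem π (runTopVal_mem π w), WithBot.coe_lt_coe.mp hr2⟩

lemma split_card (v : Fin n) :
    ((runsSet π).filter fun r => r.min < (v : WithTop (Fin n))).card =
      ((runsSet π).filter fun r => r.max < (v : WithBot (Fin n))).card +
      ((runsSet π).filter fun r =>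
        r.min < (v : WithTop (Fin n)) ∧ (v : WithBot (Fin n)) ≤ r.max).card := by
  have h1 : ((runsSet π).filter fun r => r.min < (v : WithTop (Fin n))).filter
      (fun r => ¬ ((v : WithBot (Fin n)) ≤ r.max)) =
      (runsSet π).filter fun r => r.max < (v : WithBot (Fin n)) := by
    rw [Finset.filter_filter]
    apply Finset.filter_congr
    intro r hr
    obtain ⟨w, rfl⟩ := (mem_runsSet_iff π).mp hr
    rw [min_runOf, max_runOf]
    simp only [WithTop.coe_lt_coe, WithBot.coe_lt_coe, WithBot.coe_le_coe, not_le]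
    constructor
    · exact fun h => h.2
    · intro h
      exact ⟨lt_of_le_of_lt (le_trans (runBotVal_le_self π w) (self_le_runTopVal π w)) h, h⟩
  have h2 : ((runsSet π).filter fun r => r.min < (v : WithTop (Fin n))).filter
      (fun r => (v : WithBot (Fin n)) ≤ r.max) =
      (runsSet π).filter fun r =>
        r.min < (v : WithTop (Fin n)) ∧ (v : WithBot (Fin n)) ≤ r.max := by
    rw [Finset.filter_filter]
  rw [← h1, ← h2, add_comm]
  exact (Finset.card_filter_add_card_filter_not _).symm

end Stmt9Aux
namespace Stmt9Aux

variable {n : ℕ} (π : Equiv.Perm (Fin n))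

lemma mem_Pat31s2 {p : Fin n × Fin n} : p ∈ Pat31s2 π ↔
    ∃ h : p.1.val + 1 < n, p.1.val + 1 < p.2.val ∧ π p.2 < π p.1 ∧
      π ⟨p.1.val + 1, h⟩ < π p.2 ∧ runBotVal π (π p.1) < runBotVal π (π p.2) := by
  simp [Pat31s2]

lemma runOf_pi_eq {i i' : Fin n} (h : runOf π (π i) = runOf π (π i')) :
    runStartPos π i = runStartPos π i' := by
  have := (mem_runOf π).mp (h ▸ self_mem_runOf π (π i))
  rwa [Equiv.symm_apply_apply, Equiv.symm_apply_apply] at this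

lemma inj_helper_lt {v : Fin n} {i i' : Fin n}
    (hi : i.val + 1 < n) (hi' : i'.val + 1 < n)
    (h1 : π ⟨i.val + 1, hi⟩ < v) (h2 : v < π i)
    (h1' : π ⟨i'.val + 1, hi'⟩ < v) (h2' : v < π i')
    (hrun : runOf π (π i) = runOf π (π i')) (hlt : i < i') : False := by
  have hd : IsDesc π i.val := ⟨hi, lt_trans h1 h2⟩
  have hsr : SameRunLe π i ⟨i.val + 1, hi⟩ := by
    refine ⟨Nat.le_succ _, fun k hk hk' => ?_⟩
    have : k = i.val := by
      have : k < i.val + 1 := hk'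
      omega
    exact this ▸ hd
  have hstart : runStartPos π (⟨i.val + 1, hi⟩ : Fin n) = runStartPos π i' := by
    rw [← runStartPos_eq_of_sameRunLe π hsr]
    exact runOf_pi_eq π hrun
  have hle : (⟨i.val + 1, hi⟩ : Fin n) ≤ i' := hlt
  have hsame := sameRunLe_of_start_eq π hstart hle
  have hle2 := pi_le_of_sameRunLe π hsame
  exact absurd (lt_trans (lt_of_le_of_lt hle2 h1) h2') (lt_irrefl _)

lemma inj_helper {v : Fin n} {i i' : Fin n}
    (hi : i.val + 1 < n) (hi' : i'.val + 1 < n)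
    (h1 : π ⟨i.val + 1, hi⟩ < v) (h2 : v < π i)
    (h1' : π ⟨i'.val + 1, hi'⟩ < v) (h2' : v < π i')
    (hrun : runOf π (π i) = runOf π (π i')) : i = i' := by
  by_contra hne
  rcases lt_or_gt_of_ne hne with hlt | hgt
  · exact inj_helper_lt π hi hi' h1 h2 h1' h2' hrun hlt
  · exact inj_helper_lt π hi' hi h1' h2' h1 h2 hrun.symm hgt

end Stmt9Aux
/-- the number of run bottoms below `v` minus the number of run tops
below `v` is the number of runs `r` with `min r < v ≤ max r`; if `v` is not a run
bottom, this exceeds the multiplicity of `v` among the descent views. -/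
theorem stmt9 (n : ℕ) (π : Equiv.Perm (Fin n)) (v : Fin n) :
    ((RB π).filter fun w => w < v).card =
      ((RT π).filter fun w => w < v).card +
      ((runsSet π).filter fun r =>
        r.min < (v : WithTop (Fin n)) ∧ (v : WithBot (Fin n)) ≤ r.max).card ∧
    (v ∉ RB π →
      (dvM π).count v <
        ((runsSet π).filter fun r =>
          r.min < (v : WithTop (Fin n)) ∧ (v : WithBot (Fin n)) ≤ r.max).card) := by
  open Stmt9Aux in
  constructor
  · rw [Stmt9Aux.card_RB_filter π v, Stmt9Aux.split_card π v,
      Stmt9Aux.card_RT_filter π v]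
  · intro hv
    have hcount : (dvM π).count v =
        ((Pat31s2 π).filter fun p => v = π p.2).card := by
      rw [dvM, Multiset.count_map]
      rfl
    have hmem : runOf π v ∈ (runsSet π).filter (fun r =>
        r.min < (v : WithTop (Fin n)) ∧ (v : WithBot (Fin n)) ≤ r.max) := by
      rw [Finset.mem_filter, Stmt9Aux.min_runOf, Stmt9Aux.max_runOf]
      refine ⟨(Stmt9Aux.mem_runsSet_iff π).mpr ⟨v, rfl⟩, WithTop.coe_lt_coe.mpr ?_,
        WithBot.coe_le_coe.mpr (Stmt9Aux.self_le_runTopVal π v)⟩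
      exact lt_of_le_of_ne (Stmt9Aux.runBotVal_le_self π v)
        (fun h => hv ((Stmt9Aux.mem_RB_iff π).mpr h))
    have hmaps : ∀ p ∈ (Pat31s2 π).filter (fun p => v = π p.2),
        runOf π (π p.1) ∈ (((runsSet π).filter (fun r =>
          r.min < (v : WithTop (Fin n)) ∧ (v : WithBot (Fin n)) ≤ r.max)).erase
          (runOf π v)) := by
      intro p hp
      rw [Finset.mem_filter] at hp
      obtain ⟨hp1, hpv⟩ := hp
      obtain ⟨h, hlt, h3, h4, h5⟩ := (Stmt9Aux.mem_Pat31s2 π).mp hp1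
      rw [Finset.mem_erase]
      constructor
      · intro heq
        rw [hpv] at heq
        have := Stmt9Aux.runBotVal_eq_of_mem π
          (heq ▸ Stmt9Aux.self_mem_runOf π (π p.1))
        exact absurd h5 (this ▸ lt_irrefl _)
      · rw [Finset.mem_filter, Stmt9Aux.min_runOf, Stmt9Aux.max_runOf]
        refine ⟨(Stmt9Aux.mem_runsSet_iff π).mpr ⟨π p.1, rfl⟩,
          WithTop.coe_lt_coe.mpr ?_, WithBot.coe_le_coe.mpr ?_⟩
        · calc runBotVal π (π p.1) < runBotVal π (π p.2) := h5
            _ ≤ π p.2 := Stmt9Aux.runBotVal_le_self π _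
            _ = v := hpv.symm
        · rw [hpv]
          exact le_of_lt (lt_of_lt_of_le h3 (Stmt9Aux.self_le_runTopVal π _))
    have hinj : Set.InjOn (fun p : Fin n × Fin n => runOf π (π p.1))
        ((Pat31s2 π).filter fun p => v = π p.2) := by
      intro p hp q hq hpq
      rw [Finset.mem_coe, Finset.mem_filter] at hp hq
      obtain ⟨hp1, hpv⟩ := hp
      obtain ⟨hq1, hqv⟩ := hq
      obtain ⟨h, hlt, h3, h4, h5⟩ := (Stmt9Aux.mem_Pat31s2 π).mp hp1
      obtain ⟨h', hlt', h3', h4', h5'⟩ := (Stmt9Aux.mem_Pat31s2 π).mp hq1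
      have h2 : p.2 = q.2 := π.injective (hpv ▸ hqv ▸ rfl)
      have h1 : p.1 = q.1 := by
        refine Stmt9Aux.inj_helper (v := v) π h h' ?_ ?_ ?_ ?_ hpq
        · rw [← hpv] at h4; exact h4
        · rw [← hpv] at h3; exact h3
        · rw [← hqv] at h4'; exact h4'
        · rw [← hqv] at h3'; exact h3'
      exact Prod.ext h1 h2
    have hle := Finset.card_le_card_of_injOn _ hmaps hinj
    have hcard := Finset.card_erase_of_mem hmem
    have hpos : 0 < ((runsSet π).filter (fun r =>
        r.min < (v : WithTop (Fin n)) ∧ (v : WithBot (Fin n)) ≤ r.max)).card :=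
      Finset.card_pos.mpr ⟨_, hmem⟩
    rw [hcount]
    omega
end

section
/- For every permutation π of {1,…,n}, the number of permutations π' of {1,…,n} with the same set of descending runs as π (i.e., R(π') = R(π)) equals the number of permutations σ of {1,…,n} that agree with χ_e(π) on {1,…,n}∖RT and satisfy σ(i) ≤ i for every i in RT, where RT is the set of run tops of π. -/
open Finset
open scoped Classical

variable {n : ℕ}

/-!
Cut the one-line notation of `π'` before each of its left-to-right maxima and close every
segment into a cycle (Foata's fundamental transformation, read backwards). The resulting
permutation `foata π'` determines `π'`, since listing its cycles by increasing maxima, each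
starting from its maximum, gives back the segments. If `π'` has the runs of `π`, then `foata π'`
sends every value that is not a run top to the next larger value of its run and every run top
`t` to a value `≤ t`; conversely, these two properties force `π'` to have the runs of `π`. Thus
the left side counts permutations that agree off `RT` with one fixed bijection onto the
complement of `RB` and satisfy `σ t ≤ t` on `RT`. This count does not depend on the fixed
bijection: left multiplication by a permutation of the complement of `RB` turns one bijection
into any other.
-/

namespace Equiv.Perm

variable {α : Type*} {A B : Finset α}

lemma apply_mem_of_agrees (f : {x // x ∉ A} ≃ {x // x ∉ B}) {σ : Perm α}
    (hσ : ∀ x (hx : x ∉ A), σ x = f ⟨x, hx⟩) {a : α} (ha : a ∈ A) : σ a ∈ B := by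
  by_contra hb
  obtain ⟨x, hx⟩ := f.surjective ⟨σ a, hb⟩
  have : σ x = σ a := by rw [hσ x x.2, hx]
  exact x.2 (σ.injective this ▸ ha)

lemma card_agreeing_le [Fintype α] (f g : {x // x ∉ A} ≃ {x // x ∉ B}) (P : α → α → Prop) :
    (univ.filter fun σ : Perm α =>
      (∀ x (hx : x ∉ A), σ x = f ⟨x, hx⟩) ∧ ∀ a ∈ A, P a (σ a)).card ≤
    (univ.filter fun σ : Perm α =>
      (∀ x (hx : x ∉ A), σ x = g ⟨x, hx⟩) ∧ ∀ a ∈ A, P a (σ a)).card := by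
  -- left multiplication by `g ∘ f⁻¹`, extended by the identity on `B`, replaces `f` by `g`
  set h : Perm α := ofSubtype (f.symm.trans g)
  refine card_le_card_of_injOn (h * ·) (fun σ hσ => ?_) (fun σ _ τ _ => mul_left_cancel)
  simp only [mem_coe, mem_filter, mem_univ, true_and] at hσ ⊢
  obtain ⟨hf, hP⟩ := hσ
  have hA : ∀ a ∈ A, (h * σ) a = σ a := fun a ha =>
    ofSubtype_apply_of_not_mem _ (not_not.mpr (apply_mem_of_agrees f hf ha))
  refine ⟨fun x hx => ?_, fun a ha => hA a ha ▸ hP a ha⟩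
  rw [mul_apply, hf x hx, ofSubtype_apply_coe]
  simp

lemma card_agreeing_congr [Fintype α] (f g : {x // x ∉ A} ≃ {x // x ∉ B}) (P : α → α → Prop) :
    (univ.filter fun σ : Perm α =>
      (∀ x (hx : x ∉ A), σ x = f ⟨x, hx⟩) ∧ ∀ a ∈ A, P a (σ a)).card =
    (univ.filter fun σ : Perm α =>
      (∀ x (hx : x ∉ A), σ x = g ⟨x, hx⟩) ∧ ∀ a ∈ A, P a (σ a)).card :=
  (card_agreeing_le f g P).antisymm (card_agreeing_le g f P)

section CycleMax

variable {α : Type*} [Fintype α] [LinearOrder α] (σ : Perm α)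

noncomputable def cycleMax (v : α) : α :=
  (univ.filter (σ.SameCycle v)).max' ⟨v, mem_filter.mpr ⟨mem_univ v, SameCycle.refl σ v⟩⟩

lemma sameCycle_cycleMax (v : α) : σ.SameCycle v (σ.cycleMax v) := by
  unfold cycleMax
  exact (mem_filter.mp (max'_mem (univ.filter (σ.SameCycle v)) _)).2

variable {σ}

lemma cycleMax_eq_of_sameCycle {v m : α} (hm : σ.SameCycle v m)
    (hle : ∀ u, σ.SameCycle v u → u ≤ m) : σ.cycleMax v = m :=
  le_antisymm (hle _ (σ.sameCycle_cycleMax v)) (le_max' _ m (mem_filter.mpr ⟨mem_univ m, hm⟩))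

variable (σ)

noncomputable def stepsFromCycleMax (v : α) : ℕ :=
  Nat.find (σ.sameCycle_cycleMax v).symm.exists_nat_pow_eq

lemma stepsFromCycleMax_eq_iff {v : α} {d : ℕ} :
    σ.stepsFromCycleMax v = d ↔
      (σ ^ d) (σ.cycleMax v) = v ∧ ∀ j < d, (σ ^ j) (σ.cycleMax v) ≠ v :=
  Nat.find_eq_iff _

/-- Sorting values by this key lists the cycles of `σ` by increasing maxima, each starting from
its maximum and following `σ`. -/
noncomputable def foataKey (v : α) : α ×ₗ ℕ := toLex (σ.cycleMax v, σ.stepsFromCycleMax v)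

end CycleMax

lemma eq_of_strictMono_comp {β : Type*} [Preorder β] {κ : Fin n → β}
    {w₁ w₂ : Perm (Fin n)} (h₁ : StrictMono (κ ∘ w₁)) (h₂ : StrictMono (κ ∘ w₂)) :
    w₁ = w₂ := by
  have hrange : Set.range (κ ∘ w₁) = Set.range (κ ∘ w₂) := by
    simp only [Set.range_comp, EquivLike.range_eq_univ]
  have hκ : Function.Injective κ := h₁.injective.of_comp_right w₁.surjective
  ext p
  exact congrArg Fin.val (hκ (congrFun ((h₁.range_inj h₂).mp hrange) p))

end Equiv.Perm

section Runs

variable {π w : Equiv.Perm (Fin n)}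

lemma SameRunLe.trans {a b c : Fin n} (h₁ : SameRunLe π a b) (h₂ : SameRunLe π b c) :
    SameRunLe π a c :=
  ⟨h₁.1.trans h₂.1, fun k hak hkc =>
    if hkb : k < b.val then h₁.2 k hak hkb else h₂.2 k (not_lt.mp hkb) hkc⟩

lemma sameRunLe_runStartPos (p : Fin n) : SameRunLe π (runStartPos π p) p := by
  unfold runStartPos
  exact (mem_filter.mp (min'_mem (univ.filter fun a => SameRunLe π a p) _)).2

lemma runStartPos_le (p : Fin n) : runStartPos π p ≤ p :=
  (sameRunLe_runStartPos p).1

lemma runStartPos_le_of_sameRunLe {a p : Fin n} (h : SameRunLe π a p) : runStartPos π p ≤ a :=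
  min'_le _ a (mem_filter.mpr ⟨mem_univ a, h⟩)

lemma sameRunLe_runEndPos (p : Fin n) : SameRunLe π p (runEndPos π p) := by
  unfold runEndPos
  exact (mem_filter.mp (max'_mem (univ.filter fun b => SameRunLe π p b) _)).2

lemma le_runEndPos_of_sameRunLe {p b : Fin n} (h : SameRunLe π p b) : b ≤ runEndPos π p :=
  le_max' _ b (mem_filter.mpr ⟨mem_univ b, h⟩)

lemma runStartPos_zero (h : 0 < n) : runStartPos π ⟨0, h⟩ = ⟨0, h⟩ :=
  le_antisymm (runStartPos_le _) (Fin.le_def.mpr (Nat.zero_le _))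

lemma runStartPos_succ_of_isDesc {i : ℕ} (h : i + 1 < n) (hd : IsDesc π i) :
    runStartPos π ⟨i + 1, h⟩ = runStartPos π ⟨i, by omega⟩ := by
  have hstep : SameRunLe π ⟨i, by omega⟩ ⟨i + 1, h⟩ :=
    ⟨Fin.le_def.mpr (by simp), fun k hik hki => by simp only at hik hki; rwa [show k = i by omega]⟩
  refine le_antisymm
    (runStartPos_le_of_sameRunLe ((sameRunLe_runStartPos (π := π) ⟨i, by omega⟩).trans hstep)) ?_
  have hle : runStartPos π ⟨i + 1, h⟩ ≤ ⟨i, by omega⟩ := runStartPos_le_of_sameRunLe hstep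
  refine runStartPos_le_of_sameRunLe ⟨hle, fun k hk hki => ?_⟩
  exact (sameRunLe_runStartPos (π := π) ⟨i + 1, h⟩).2 k hk (by simp only at hki ⊢; omega)

lemma runStartPos_succ_of_not_isDesc {i : ℕ} (h : i + 1 < n) (hd : ¬ IsDesc π i) :
    runStartPos π ⟨i + 1, h⟩ = ⟨i + 1, h⟩ := by
  refine le_antisymm (runStartPos_le _) (Fin.le_def.mpr ?_)
  by_contra hlt
  simp only at hlt
  exact hd ((sameRunLe_runStartPos (π := π) ⟨i + 1, h⟩).2 i (by omega) (by simp))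

lemma runStartPos_induction {P : Fin n → Prop} (start : ∀ p, runStartPos π p = p → P p)
    (step : ∀ i (h : i + 1 < n), IsDesc π i → P ⟨i, by omega⟩ → P ⟨i + 1, h⟩) (p : Fin n) :
    P p := by
  obtain ⟨i, hi⟩ := p
  induction i with
  | zero => exact start _ (runStartPos_zero hi)
  | succ i ih =>
    by_cases hd : IsDesc π i
    · exact step i hi hd (ih (by omega))
    · exact start _ (runStartPos_succ_of_not_isDesc hi hd)

lemma runStartPos_runStartPos (p : Fin n) : runStartPos π (runStartPos π p) = runStartPos π p := by
  induction p using runStartPos_induction (π := π) with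
  | start p hp => rw [hp, hp]
  | step i h hd ih => rwa [runStartPos_succ_of_isDesc h hd]

lemma apply_lt_apply_of_runStartPos_eq {q p : Fin n} (hqp : q < p)
    (h : runStartPos π q = runStartPos π p) : π p < π q := by
  induction p using runStartPos_induction (π := π) generalizing q with
  | start p hp => exact absurd ((runStartPos_le q).trans_lt hqp) (by rw [h, hp]; exact lt_irrefl _)
  | step i hi hd ih =>
    rw [runStartPos_succ_of_isDesc hi hd] at h
    have hdesc : π ⟨i + 1, hi⟩ < π ⟨i, by omega⟩ := hd.2
    rcases Nat.lt_succ_iff_lt_or_eq.mp (Fin.lt_def.mp hqp) with hq | hq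
    · exact hdesc.trans (ih (Fin.lt_def.mpr hq) h)
    · rwa [show q = ⟨i, by omega⟩ from Fin.ext hq]

lemma apply_mem_RT_iff (p : Fin n) : π p ∈ RT π ↔ runStartPos π p = p := by
  rw [RT, mem_filter]
  simp only [runTopVal, mem_univ, true_and, Equiv.symm_apply_apply,
    EmbeddingLike.apply_eq_iff_eq]

lemma apply_mem_RB_iff (p : Fin n) : π p ∈ RB π ↔ ¬ IsDesc π p.val := by
  rw [RB, mem_filter]
  simp only [runBotVal, mem_univ, true_and, Equiv.symm_apply_apply,
    EmbeddingLike.apply_eq_iff_eq]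
  constructor
  · rintro hp ⟨h, hd⟩
    have : SameRunLe π p ⟨p.val + 1, h⟩ :=
      ⟨Fin.le_def.mpr (by simp), fun k hk hk' => by
        simp only at hk'
        rw [show k = p.val by omega]
        exact ⟨h, hd⟩⟩
    have := Fin.le_def.mp (le_runEndPos_of_sameRunLe this)
    rw [hp] at this
    simp at this
  · intro hd
    refine le_antisymm (Fin.le_def.mpr ?_) (sameRunLe_runEndPos p).1
    by_contra hlt
    exact hd ((sameRunLe_runEndPos p).2 p.val le_rfl (by omega))

lemma apply_zero_mem_RT (h : 0 < n) : π ⟨0, h⟩ ∈ RT π :=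
  (apply_mem_RT_iff _).mpr (runStartPos_zero h)

lemma apply_succ_mem_RT_iff {i : ℕ} (h : i + 1 < n) : π ⟨i + 1, h⟩ ∈ RT π ↔ ¬ IsDesc π i := by
  rw [apply_mem_RT_iff]
  refine ⟨fun hs hd => ?_, runStartPos_succ_of_not_isDesc h⟩
  have := Fin.le_def.mp (runStartPos_le (π := π) ⟨i, by omega⟩)
  rw [← runStartPos_succ_of_isDesc h hd, hs] at this
  simp at this

lemma exists_isDesc_of_notMem_RT {x : Fin n} (hx : x ∉ RT π) :
    ∃ i, ∃ h : i + 1 < n, π ⟨i + 1, h⟩ = x ∧ IsDesc π i := by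
  obtain ⟨p, rfl⟩ := π.surjective x
  obtain ⟨_ | i, hp⟩ := p
  · exact absurd (apply_zero_mem_RT hp) hx
  · exact ⟨i, hp, rfl, not_not.mp (mt (apply_succ_mem_RT_iff hp).mpr hx)⟩

lemma mem_runOf_iff {u v : Fin n} :
    u ∈ runOf π v ↔ runStartPos π (π.symm u) = runStartPos π (π.symm v) := by
  simp [runOf]

lemma runOf_eq_runOf_iff {u v : Fin n} : runOf π u = runOf π v ↔ u ∈ runOf π v := by
  refine ⟨fun h => h ▸ mem_runOf_iff.mpr rfl, fun h => ?_⟩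
  ext x
  rw [mem_runOf_iff, mem_runOf_iff, mem_runOf_iff.mp h]

lemma runOf_succ_of_isDesc {i : ℕ} (h : i + 1 < n) (hd : IsDesc π i) :
    runOf π (π ⟨i + 1, h⟩) = runOf π (π ⟨i, by omega⟩) := by
  rw [runOf_eq_runOf_iff, mem_runOf_iff]
  simpa using runStartPos_succ_of_isDesc h hd

lemma mem_RT_iff_forall_mem_runOf {v : Fin n} : v ∈ RT π ↔ ∀ u ∈ runOf π v, u ≤ v := by
  obtain ⟨p, rfl⟩ := π.surjective v
  rw [apply_mem_RT_iff]
  constructor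
  · intro hp u hu
    obtain ⟨q, rfl⟩ := π.surjective u
    rw [mem_runOf_iff] at hu
    simp only [Equiv.symm_apply_apply, hp] at hu
    rcases (runStartPos_le q).lt_or_eq with hlt | heq
    · rw [← hu]
      exact (apply_lt_apply_of_runStartPos_eq hlt (runStartPos_runStartPos q)).le
    · rw [← hu, heq]
  · intro h
    by_contra hne
    have hmem : π (runStartPos π p) ∈ runOf π (π p) := by
      simp [mem_runOf_iff, runStartPos_runStartPos]
    exact absurd (h _ hmem) (not_le.mpr (apply_lt_apply_of_runStartPos_eq
      ((runStartPos_le p).lt_of_ne hne) (runStartPos_runStartPos p)))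

lemma eq_of_mem_RT_of_runOf_eq {x y : Fin n} (hx : x ∈ RT π) (hy : y ∈ RT π)
    (h : runOf π x = runOf π y) : x = y :=
  le_antisymm (mem_RT_iff_forall_mem_runOf.mp hy x (runOf_eq_runOf_iff.mp h))
    (mem_RT_iff_forall_mem_runOf.mp hx y (runOf_eq_runOf_iff.mp h.symm))

lemma runOf_eq_of_runsSet_eq (h : runsSet w = runsSet π) : runOf w = runOf π := by
  funext v
  have hv : runOf w v ∈ runsSet π := by
    rw [← h]
    exact mem_image_of_mem _ (mem_univ v)
  obtain ⟨u, -, hu⟩ := mem_image.mp hv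
  have hvu : v ∈ runOf π u := by
    rw [hu]
    exact mem_runOf_iff.mpr rfl
  rw [← hu, runOf_eq_runOf_iff.mpr hvu]

lemma RT_eq_of_runsSet_eq (h : runsSet w = runsSet π) : RT w = RT π := by
  ext v
  rw [mem_RT_iff_forall_mem_runOf, mem_RT_iff_forall_mem_runOf, runOf_eq_of_runsSet_eq h]

end Runs

section NextLargerInRun

variable {π w : Equiv.Perm (Fin n)}

/-- In one-line notation this is the value just before `v`; it is junk (`v` itself) when `v` is a
run top. -/
noncomputable def nextLargerInRun (π : Equiv.Perm (Fin n)) (v : Fin n) : Fin n :=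
  if h : ((runOf π v).filter (v < ·)).Nonempty then ((runOf π v).filter (v < ·)).min' h else v

lemma nextLargerInRun_apply_succ {i : ℕ} (h : i + 1 < n) (hd : IsDesc π i) :
    nextLargerInRun π (π ⟨i + 1, h⟩) = π ⟨i, by omega⟩ := by
  have hmem : π ⟨i, by omega⟩ ∈ (runOf π (π ⟨i + 1, h⟩)).filter (π ⟨i + 1, h⟩ < ·) := by
    rw [mem_filter, ← runOf_eq_runOf_iff, runOf_succ_of_isDesc h hd]
    exact ⟨rfl, hd.2⟩
  rw [nextLargerInRun, dif_pos ⟨_, hmem⟩]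
  refine le_antisymm (min'_le _ _ hmem) (le_min' _ _ _ fun u hu => ?_)
  obtain ⟨q, rfl⟩ := π.surjective u
  rw [mem_filter, mem_runOf_iff] at hu
  simp only [Equiv.symm_apply_apply, runStartPos_succ_of_isDesc h hd] at hu
  obtain ⟨hrun, hlt⟩ := hu
  rcases lt_trichotomy q.val i with hq | hq | hq
  · exact (apply_lt_apply_of_runStartPos_eq (Fin.lt_def.mpr hq) hrun).le
  · rw [show q = ⟨i, by omega⟩ from Fin.ext hq]
  · exfalso
    rcases (show i + 1 ≤ q.val by omega).lt_or_eq with hq' | hq'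
    · refine lt_asymm
        (apply_lt_apply_of_runStartPos_eq (q := ⟨i + 1, h⟩) (Fin.lt_def.mpr hq') ?_) hlt
      rw [hrun, runStartPos_succ_of_isDesc h hd]
    · exact hlt.ne (by rw [show q = ⟨i + 1, h⟩ from Fin.ext hq'.symm])

lemma lt_nextLargerInRun {x : Fin n} (hx : x ∉ RT π) : x < nextLargerInRun π x := by
  obtain ⟨i, h, rfl, hd⟩ := exists_isDesc_of_notMem_RT hx
  rw [nextLargerInRun_apply_succ h hd]
  exact hd.2

lemma runOf_nextLargerInRun {x : Fin n} (hx : x ∉ RT π) :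
    runOf π (nextLargerInRun π x) = runOf π x := by
  obtain ⟨i, h, rfl, hd⟩ := exists_isDesc_of_notMem_RT hx
  rw [nextLargerInRun_apply_succ h hd, runOf_succ_of_isDesc h hd]

lemma nextLargerInRun_eq_of_runsSet_eq (h : runsSet w = runsSet π) :
    nextLargerInRun w = nextLargerInRun π := by
  funext v
  simp only [nextLargerInRun, runOf_eq_of_runsSet_eq h]

lemma runsSet_eq_of_adjacent (h₀ : ∀ h : 0 < n, w ⟨0, h⟩ ∈ RT π)
    (hnext : ∀ i (h : i + 1 < n), w ⟨i + 1, h⟩ ∉ RT π →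
      w ⟨i, by omega⟩ = nextLargerInRun π (w ⟨i + 1, h⟩))
    (hasc : ∀ i (h : i + 1 < n), w ⟨i + 1, h⟩ ∈ RT π → w ⟨i, by omega⟩ < w ⟨i + 1, h⟩) :
    runsSet w = runsSet π := by
  have hRT : ∀ p, w p ∈ RT w ↔ w p ∈ RT π := by
    rintro ⟨_ | i, hp⟩
    · exact iff_of_true (apply_zero_mem_RT hp) (h₀ hp)
    · rw [apply_succ_mem_RT_iff, IsDesc, not_exists]
      by_cases ht : w ⟨i + 1, hp⟩ ∈ RT π
      · exact iff_of_true (fun _ => lt_asymm (hasc i hp ht)) ht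
      · refine iff_of_false (fun hn => hn hp ?_) ht
        rw [hnext i hp ht]
        exact lt_nextLargerInRun ht
  have hrun : ∀ p, runOf π (w p) = runOf π (w (runStartPos w p)) := by
    intro p
    induction p using runStartPos_induction (π := w) with
    | start p hp => rw [hp]
    | step i h hd ih =>
      have hnot : w ⟨i + 1, h⟩ ∉ RT π := by
        rw [← hRT, apply_succ_mem_RT_iff, not_not]
        exact hd
      rw [runStartPos_succ_of_isDesc h hd, ← ih, hnext i h hnot, runOf_nextLargerInRun hnot]
  have hstart : ∀ u, w (runStartPos w (w.symm u)) ∈ RT π := fun u =>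
    (hRT _).mp ((apply_mem_RT_iff _).mpr (runStartPos_runStartPos _))
  have hrun' : ∀ u, runOf π u = runOf π (w (runStartPos w (w.symm u))) := fun u => by
    simpa using hrun (w.symm u)
  have hrunOf : runOf w = runOf π := by
    funext v
    ext u
    rw [mem_runOf_iff, ← runOf_eq_runOf_iff, ← w.injective.eq_iff, hrun' u, hrun' v]
    exact ⟨congrArg (runOf π), eq_of_mem_RT_of_runOf_eq (hstart _) (hstart _)⟩
  rw [runsSet, runsSet, hrunOf]

end NextLargerInRun

section Foata

variable (w : Equiv.Perm (Fin n))

def prefixMax (q : Fin n) : Fin n := (Iic q).sup' ⟨q, mem_Iic.mpr le_rfl⟩ w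

variable {w}

lemma apply_le_prefixMax {i q : Fin n} (h : i ≤ q) : w i ≤ prefixMax w q :=
  le_sup' w (mem_Iic.mpr h)

lemma le_prefixMax_symm (v : Fin n) : v ≤ prefixMax w (w.symm v) := by
  simpa using apply_le_prefixMax (w := w) (le_refl (w.symm v))

lemma exists_apply_eq_prefixMax (q : Fin n) : ∃ i ≤ q, w i = prefixMax w q := by
  obtain ⟨i, hi, h⟩ := exists_mem_eq_sup' ⟨q, mem_Iic.mpr le_rfl⟩ w
  exact ⟨i, mem_Iic.mp hi, h.symm⟩

lemma prefixMax_mono : Monotone (prefixMax w) := fun q r hqr => by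
  obtain ⟨i, hi, h⟩ := exists_apply_eq_prefixMax (w := w) q
  exact h ▸ apply_le_prefixMax (hi.trans hqr)

lemma apply_mem_lrMax_iff (p : Fin n) : w p ∈ lrMax w ↔ prefixMax w p = w p := by
  simp only [lrMax, mem_filter, mem_univ, true_and, Equiv.symm_apply_apply]
  constructor
  · intro h
    obtain ⟨i, hi, hw⟩ := exists_apply_eq_prefixMax (w := w) p
    rcases hi.lt_or_eq with hlt | rfl
    · exact absurd (h i hlt) (not_lt_of_ge (hw ▸ apply_le_prefixMax le_rfl))
    · exact hw.symm
  · exact fun h i hi => (h ▸ apply_le_prefixMax hi.le).lt_of_ne (w.injective.ne hi.ne)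

lemma prefixMax_mem_lrMax (q : Fin n) : prefixMax w q ∈ lrMax w := by
  obtain ⟨i, hi, h⟩ := exists_apply_eq_prefixMax (w := w) q
  rw [← h, apply_mem_lrMax_iff]
  exact le_antisymm (h ▸ prefixMax_mono hi) (apply_le_prefixMax le_rfl)

lemma prefixMax_succ_of_notMem {i : ℕ} (h : i + 1 < n) (hn : w ⟨i + 1, h⟩ ∉ lrMax w) :
    prefixMax w ⟨i + 1, h⟩ = prefixMax w ⟨i, by omega⟩ := by
  obtain ⟨j, hj, hw⟩ := exists_apply_eq_prefixMax (w := w) ⟨i + 1, h⟩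
  rcases hj.lt_or_eq with hlt | rfl
  · have hji : j ≤ ⟨i, by omega⟩ := Fin.le_def.mpr (Nat.le_of_lt_succ hlt)
    exact le_antisymm (hw ▸ apply_le_prefixMax hji) (prefixMax_mono (Fin.le_def.mpr (by simp)))
  · exact absurd ((apply_mem_lrMax_iff _).mpr hw.symm) hn

lemma prefixMax_lt_of_mem {i : ℕ} (h : i + 1 < n) (hm : w ⟨i + 1, h⟩ ∈ lrMax w) :
    prefixMax w ⟨i, by omega⟩ < w ⟨i + 1, h⟩ := by
  obtain ⟨j, hj, hw⟩ := exists_apply_eq_prefixMax (w := w) ⟨i, by omega⟩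
  simp only [lrMax, mem_filter, mem_univ, true_and, Equiv.symm_apply_apply] at hm
  exact hw ▸ hm j (Fin.lt_def.mpr (by simp only [Fin.le_def] at hj ⊢; omega))

lemma prefixMax_symm_prefixMax (q : Fin n) :
    prefixMax w (w.symm (prefixMax w q)) = prefixMax w q := by
  have := (apply_mem_lrMax_iff (w := w) (w.symm (prefixMax w q))).mp
  simpa using this (by simpa using prefixMax_mem_lrMax q)

lemma symm_prefixMax_le (q : Fin n) : w.symm (prefixMax w q) ≤ q := by
  obtain ⟨i, hi, h⟩ := exists_apply_eq_prefixMax (w := w) q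
  simpa [← h] using hi

variable (w)

/-- Cutting the one-line notation of `w` before each left-to-right maximum, this sends each value
to the next one in its segment, and the last value of a segment back to the first. -/
noncomputable def segmentSucc (v : Fin n) : Fin n :=
  if h : ∃ h : (w.symm v).val + 1 < n, w ⟨(w.symm v).val + 1, h⟩ ∉ lrMax w then
    w ⟨(w.symm v).val + 1, h.1⟩
  else prefixMax w (w.symm v)

variable {w}

lemma segmentSucc_apply_of_notMem {i : ℕ} (h : i + 1 < n) (hn : w ⟨i + 1, h⟩ ∉ lrMax w) :
    segmentSucc w (w ⟨i, by omega⟩) = w ⟨i + 1, h⟩ := by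
  rw [segmentSucc, dif_pos] <;> simp [hn, h]

lemma segmentSucc_apply_of_forall_mem {p : Fin n}
    (hp : ∀ h : p.val + 1 < n, w ⟨p.val + 1, h⟩ ∈ lrMax w) :
    segmentSucc w (w p) = prefixMax w p := by
  rw [segmentSucc, dif_neg] <;> simp [hp]

lemma segmentSucc_cases (p : Fin n) :
    (∃ h : p.val + 1 < n, w ⟨p.val + 1, h⟩ ∉ lrMax w ∧ segmentSucc w (w p) = w ⟨p.val + 1, h⟩) ∨
    ((∀ h : p.val + 1 < n, w ⟨p.val + 1, h⟩ ∈ lrMax w) ∧ segmentSucc w (w p) = prefixMax w p) := by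
  by_cases hp : ∃ h : p.val + 1 < n, w ⟨p.val + 1, h⟩ ∉ lrMax w
  · obtain ⟨h, hn⟩ := hp
    exact Or.inl ⟨h, hn, segmentSucc_apply_of_notMem h hn⟩
  · push Not at hp
    exact Or.inr ⟨hp, segmentSucc_apply_of_forall_mem hp⟩

lemma segmentSucc_ne {a b : Fin n} (hab : a < b) : segmentSucc w (w a) ≠ segmentSucc w (w b) := by
  have hbn := b.isLt
  have hab' := Fin.lt_def.mp hab
  rcases segmentSucc_cases a with ⟨ha, hna, hsa⟩ | ⟨ha, hsa⟩ <;>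
    rcases segmentSucc_cases b with ⟨hb, hnb, hsb⟩ | ⟨-, hsb⟩ <;> rw [hsa, hsb]
  · exact fun he => absurd (congrArg Fin.val (w.injective he)) (by simp only; omega)
  · exact fun he => hna (he ▸ prefixMax_mem_lrMax b)
  · exact fun he => hnb (he ▸ prefixMax_mem_lrMax a)
  · refine ((prefixMax_lt_of_mem (by omega) (ha (by omega))).trans_le
      (apply_le_prefixMax (Fin.le_def.mpr ?_))).ne
    simp only; omega

lemma segmentSucc_injective : Function.Injective (segmentSucc w) := by
  intro x y hxy
  by_contra hne
  rcases lt_or_gt_of_ne (w.symm.injective.ne hne) with h | h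
  · exact segmentSucc_ne (w := w) h (by simpa using hxy)
  · exact segmentSucc_ne (w := w) h (by simpa using hxy.symm)

lemma prefixMax_segmentSucc (p : Fin n) :
    prefixMax w (w.symm (segmentSucc w (w p))) = prefixMax w p := by
  rcases segmentSucc_cases p with ⟨h, hn, hs⟩ | ⟨-, hs⟩ <;> rw [hs]
  · simpa using prefixMax_succ_of_notMem h hn
  · exact prefixMax_symm_prefixMax p

variable (w)

noncomputable def segmentPerm : Equiv.Perm (Fin n) :=
  Equiv.ofBijective (segmentSucc w) (Finite.injective_iff_bijective.mp segmentSucc_injective)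

variable {w}

lemma segmentPerm_apply (v : Fin n) : segmentPerm w v = segmentSucc w v := rfl

lemma prefixMax_segmentPerm_pow (j : ℕ) (v : Fin n) :
    prefixMax w (w.symm ((segmentPerm w ^ j) v)) = prefixMax w (w.symm v) := by
  induction j with
  | zero => rfl
  | succ j ih =>
    rw [pow_succ', Equiv.Perm.mul_apply, segmentPerm_apply, ← ih,
      ← w.apply_symm_apply ((segmentPerm w ^ j) v), prefixMax_segmentSucc, w.apply_symm_apply]

lemma prefixMax_eq_of_segment {q r : Fin n} (h₁ : w.symm (prefixMax w q) ≤ r) (h₂ : r ≤ q) :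
    prefixMax w r = prefixMax w q :=
  le_antisymm (prefixMax_mono h₂)
    (prefixMax_symm_prefixMax (w := w) q ▸ prefixMax_mono h₁)

lemma apply_notMem_lrMax_of_segment {q r : Fin n} (h₁ : w.symm (prefixMax w q) < r)
    (h₂ : r ≤ q) : w r ∉ lrMax w := by
  rw [apply_mem_lrMax_iff, prefixMax_eq_of_segment h₁.le h₂, ← w.apply_symm_apply (prefixMax w q)]
  exact w.injective.ne h₁.ne

lemma segmentPerm_pow_prefixMax (q : Fin n) (d : ℕ)
    (hd : (w.symm (prefixMax w q)).val + d ≤ q.val) :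
    (segmentPerm w ^ d) (prefixMax w q) = w ⟨(w.symm (prefixMax w q)).val + d, by omega⟩ := by
  induction d with
  | zero => simp
  | succ d ih =>
    rw [pow_succ', Equiv.Perm.mul_apply, ih (by omega), segmentPerm_apply]
    refine segmentSucc_apply_of_notMem (by omega) (apply_notMem_lrMax_of_segment (q := q) ?_ ?_)
    · exact Fin.lt_def.mpr (by simp only; omega)
    · exact Fin.le_def.mpr (by simp only; omega)

lemma cycleMax_segmentPerm (q : Fin n) : (segmentPerm w).cycleMax (w q) = prefixMax w q := by
  have hq := Fin.le_def.mp (symm_prefixMax_le (w := w) q)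
  refine Equiv.Perm.cycleMax_eq_of_sameCycle (Equiv.Perm.SameCycle.symm ?_) fun u hu => ?_
  · refine ⟨((q.val - (w.symm (prefixMax w q)).val : ℕ) : ℤ), ?_⟩
    rw [zpow_natCast, segmentPerm_pow_prefixMax q _ (by omega)]
    congr 1
    exact Fin.ext (by simp only; omega)
  · obtain ⟨j, rfl⟩ := hu.exists_nat_pow_eq
    have := prefixMax_segmentPerm_pow (w := w) j (w q)
    rw [w.symm_apply_apply] at this
    exact this ▸ le_prefixMax_symm _

lemma stepsFromCycleMax_segmentPerm (q : Fin n) :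
    (segmentPerm w).stepsFromCycleMax (w q) = q.val - (w.symm (prefixMax w q)).val := by
  have hq := Fin.le_def.mp (symm_prefixMax_le (w := w) q)
  rw [Equiv.Perm.stepsFromCycleMax_eq_iff, cycleMax_segmentPerm]
  refine ⟨?_, fun j hj => ?_⟩
  · rw [segmentPerm_pow_prefixMax q _ (by omega)]
    congr 1
    exact Fin.ext (by simp only; omega)
  · rw [segmentPerm_pow_prefixMax q _ (by omega)]
    refine fun he => absurd (congrArg Fin.val (w.injective he)) ?_
    simp only
    omega

lemma strictMono_foataKey_segmentPerm :
    StrictMono (Equiv.Perm.foataKey (segmentPerm w) ∘ w) := by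
  intro q r hqr
  simp only [Function.comp_apply, Equiv.Perm.foataKey, cycleMax_segmentPerm,
    stepsFromCycleMax_segmentPerm, Prod.Lex.toLex_lt_toLex]
  rcases (prefixMax_mono (w := w) hqr.le).lt_or_eq with hlt | heq
  · exact Or.inl hlt
  · refine Or.inr ⟨heq, ?_⟩
    have hq := Fin.le_def.mp (symm_prefixMax_le (w := w) q)
    rw [heq] at hq ⊢
    have := Fin.lt_def.mp hqr
    omega

lemma segmentPerm_injective : Function.Injective (segmentPerm (n := n)) := fun _ _ h =>
  Equiv.Perm.eq_of_strictMono_comp strictMono_foataKey_segmentPerm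
    (h ▸ strictMono_foataKey_segmentPerm)

variable (w)

/-- A version of Foata's fundamental transformation: the cycles of `foata w` are the segments of
the one-line notation of `w` cut before its left-to-right maxima, each traversed backwards. -/
noncomputable def foata : Equiv.Perm (Fin n) := (segmentPerm w)⁻¹

variable {w}

lemma foata_bijective : Function.Bijective (foata (n := n)) :=
  Finite.injective_iff_bijective.mp (inv_injective.comp segmentPerm_injective)

lemma foata_apply_succ {i : ℕ} (h : i + 1 < n) (hn : w ⟨i + 1, h⟩ ∉ lrMax w) :
    foata w (w ⟨i + 1, h⟩) = w ⟨i, by omega⟩ := by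
  rw [foata, Equiv.Perm.inv_eq_iff_eq, segmentPerm_apply, segmentSucc_apply_of_notMem h hn]

lemma foata_apply_le {v : Fin n} (hv : v ∈ lrMax w) : foata w v ≤ v := by
  obtain ⟨p, hp⟩ := w.surjective (foata w v)
  have hs : segmentSucc w (w p) = v := by
    rw [hp, ← segmentPerm_apply, foata, Equiv.Perm.inv_def, Equiv.apply_symm_apply]
  rw [← hp]
  rcases segmentSucc_cases p with ⟨h, hn, he⟩ | ⟨-, he⟩
  · rw [← hs, he] at hv
    exact absurd hv hn
  · rw [← hs, he]
    exact apply_le_prefixMax le_rfl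

end Foata

section FoataOfRuns

variable {π w : Equiv.Perm (Fin n)}

lemma apply_zero_mem_lrMax (h : 0 < n) : w ⟨0, h⟩ ∈ lrMax w := by
  simp only [lrMax, mem_filter, mem_univ, true_and, Equiv.symm_apply_apply]
  exact fun i hi => absurd (Fin.lt_def.mp hi) (Nat.not_lt_zero _)

lemma foata_apply_of_notMem_RT {x : Fin n} (hx : x ∉ RT w) :
    foata w x = nextLargerInRun w x := by
  obtain ⟨i, h, rfl, hd⟩ := exists_isDesc_of_notMem_RT hx
  have hn : w ⟨i + 1, h⟩ ∉ lrMax w := fun hm =>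
    lt_asymm hd.2 ((apply_le_prefixMax le_rfl).trans_lt (prefixMax_lt_of_mem h hm))
  rw [foata_apply_succ h hn, nextLargerInRun_apply_succ h hd]

lemma foata_apply_le_of_mem_RT {t : Fin n} (ht : t ∈ RT w) : foata w t ≤ t := by
  by_cases hm : t ∈ lrMax w
  · exact foata_apply_le hm
  obtain ⟨⟨_ | i, hp⟩, rfl⟩ := w.surjective t
  · exact absurd (apply_zero_mem_lrMax hp) hm
  · rw [apply_succ_mem_RT_iff, IsDesc, not_exists] at ht
    rw [foata_apply_succ hp hm]
    exact not_lt.mp (ht hp)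

theorem runsSet_eq_iff_foata : runsSet w = runsSet π ↔
    (∀ x ∉ RT π, foata w x = foata π x) ∧ ∀ t ∈ RT π, foata w t ≤ t := by
  constructor
  · intro h
    have hRT := RT_eq_of_runsSet_eq h
    refine ⟨fun x hx => ?_, fun t ht => foata_apply_le_of_mem_RT (hRT ▸ ht)⟩
    rw [foata_apply_of_notMem_RT hx, foata_apply_of_notMem_RT (hRT ▸ hx),
      nextLargerInRun_eq_of_runsSet_eq h]
  · rintro ⟨hoff, hon⟩
    -- `foata w` decreases on left-to-right maxima but increases off `RT π`
    have hlr : ∀ x ∈ lrMax w, x ∈ RT π := fun x hx => by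
      by_contra hx'
      refine not_lt_of_ge (foata_apply_le hx) ?_
      rw [hoff x hx', foata_apply_of_notMem_RT hx']
      exact lt_nextLargerInRun hx'
    refine runsSet_eq_of_adjacent (fun h => hlr _ (apply_zero_mem_lrMax h))
      (fun i h hx => ?_) (fun i h ht => ?_)
    · have hn : w ⟨i + 1, h⟩ ∉ lrMax w := fun hm => hx (hlr _ hm)
      rw [← foata_apply_succ h hn, hoff _ hx, foata_apply_of_notMem_RT hx]
    · by_cases hm : w ⟨i + 1, h⟩ ∈ lrMax w
      · exact (apply_le_prefixMax le_rfl).trans_lt (prefixMax_lt_of_mem h hm)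
      · rw [← foata_apply_succ h hm]
        refine (hon _ ht).lt_of_ne ?_
        rw [foata_apply_succ h hm]
        exact w.injective.ne (by simp)

lemma notMem_RT_iff_foata_notMem_RB (x : Fin n) : x ∉ RT π ↔ foata π x ∉ RB π := by
  constructor
  · intro hx
    obtain ⟨i, h, rfl, hd⟩ := exists_isDesc_of_notMem_RT hx
    rw [foata_apply_of_notMem_RT hx, nextLargerInRun_apply_succ h hd, apply_mem_RB_iff, not_not]
    exact hd
  · intro hy hx
    obtain ⟨q, hq⟩ := π.surjective (foata π x)
    rw [← hq, apply_mem_RB_iff, not_not] at hy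
    have h : q.val + 1 < n := hy.1
    have hnot : π ⟨q.val + 1, h⟩ ∉ RT π := by
      rw [apply_succ_mem_RT_iff, not_not]
      exact hy
    have : foata π (π ⟨q.val + 1, h⟩) = foata π x := by
      rw [foata_apply_of_notMem_RT hnot, nextLargerInRun_apply_succ h hy, ← hq]
    exact hnot ((foata π).injective this ▸ hx)

end FoataOfRuns

theorem stmt11_general (n : ℕ) (π : Equiv.Perm (Fin n))
    (f : {x : Fin n // x ∉ RT π} ≃ {x : Fin n // x ∉ RB π}) :
    (Finset.univ.filter fun π' : Equiv.Perm (Fin n) => runsSet π' = runsSet π).card =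
    (Finset.univ.filter fun σ : Equiv.Perm (Fin n) =>
      (∀ x : Fin n, ∀ hx : x ∉ RT π, σ x = (f ⟨x, hx⟩ : Fin n)) ∧
      ∀ i : Fin n, i ∈ RT π → σ i ≤ i).card := by
  let g : {x : Fin n // x ∉ RT π} ≃ {x : Fin n // x ∉ RB π} :=
    (foata π).subtypeEquiv notMem_RT_iff_foata_notMem_RB
  calc _ = (Finset.univ.filter fun σ : Equiv.Perm (Fin n) =>
        (∀ x : Fin n, ∀ hx : x ∉ RT π, σ x = (g ⟨x, hx⟩ : Fin n)) ∧
        ∀ i : Fin n, i ∈ RT π → σ i ≤ i).card :=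
        card_bijective foata foata_bijective fun w => by
          simp only [mem_filter, mem_univ, true_and, runsSet_eq_iff_foata]
          rfl
    _ = _ := by convert Equiv.Perm.card_agreeing_congr g f (fun i j => j ≤ i)

/-- the number of permutations with the same set of runs as `π` equals
the number of permutations agreeing with `χ_e(π)` off the run tops and having weak
deficiencies on the run tops. -/
theorem stmt11 (n : ℕ) (π : Equiv.Perm (Fin n))
    (f : {x : Fin n // x ∉ RT π} ≃ {x : Fin n // x ∉ RB π}) (hf : IsChiE π f) :
    (Finset.univ.filter fun π' : Equiv.Perm (Fin n) => runsSet π' = runsSet π).card =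
    (Finset.univ.filter fun σ : Equiv.Perm (Fin n) =>
      (∀ x : Fin n, ∀ hx : x ∉ RT π, σ x = (f ⟨x, hx⟩ : Fin n)) ∧
      ∀ i : Fin n, i ∈ RT π → σ i ≤ i).card :=
  stmt11_general n π f
end
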